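/- arXiv:1805.11131 — 6 statements merged into one kernel-verified Lean document; each statement's English description precedes it below -/
import Mathlib

section
/- Let A be a complex unital Banach algebra and let D, X ∈ A satisfy ‖[D,X] - 1‖ ≤ ε for some ε > 0. Then ‖D‖·‖X‖ ≥ (1/2)·log(1/ε). -/
open Finset

lemma comm_pow {A : Type*} [Ring A] (D X : A) (n : ℕ) :
    D * X ^ n - X ^ n * D = ∑ k ∈ Finset.range n, X ^ k * (D * X - X * D) * X ^ (n - 1 - k) := by
  induction n with
  | zero => simp
  | succ n ih =>
    have h1 : D * X ^ (n+1) - X ^ (n+1) * D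
        = (D * X ^ n - X ^ n * D) * X + X ^ n * (D * X - X * D) := by
      rw [pow_succ]; noncomm_ring
    rw [h1, ih, Finset.sum_mul, Finset.sum_range_succ]
    congr 1
    · apply Finset.sum_congr rfl
      intro k hk
      rw [Finset.mem_range] at hk
      have h2 : n + 1 - 1 - k = (n - 1 - k) + 1 := by omega
      rw [h2, pow_succ, mul_assoc]
    · have h3 : n + 1 - 1 - n = 0 := by omega
      rw [h3, pow_zero, mul_one]

lemma star_est {A : Type*} [NormedRing A] [NormedAlgebra ℂ A] [NormOneClass A]
    (D X : A) (ε : ℝ) (h : ‖D * X - X * D - 1‖ ≤ ε) (n : ℕ) :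
    ((n : ℝ) + 1) * ‖X ^ n‖ ≤ 2 * ‖D‖ * ‖X ^ (n+1)‖ + ((n : ℝ) + 1) * ε * ‖X‖ ^ n := by
  set e := D * X - X * D - 1 with he
  have key : (n + 1) • X ^ n =
      (D * X ^ (n+1) - X ^ (n+1) * D) - ∑ k ∈ Finset.range (n+1), X ^ k * e * X ^ (n - k) := by
    rw [comm_pow]
    have hterm : ∀ k ∈ Finset.range (n+1),
        X ^ k * (D * X - X * D) * X ^ (n + 1 - 1 - k) = X ^ n + X ^ k * e * X ^ (n - k) := by
      intro k hk
      rw [Finset.mem_range] at hk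
      have h2 : n + 1 - 1 - k = n - k := by omega
      have h3 : X ^ k * X ^ (n - k) = X ^ n := by
        rw [← pow_add]; congr 1; omega
      have h4 : D * X - X * D = e + 1 := by rw [he]; noncomm_ring
      rw [h2, h4]
      calc X ^ k * (e + 1) * X ^ (n-k)
          = X ^ k * X ^ (n-k) + X ^ k * e * X ^ (n-k) := by noncomm_ring
        _ = X ^ n + X ^ k * e * X ^ (n-k) := by rw [h3]
    rw [Finset.sum_congr rfl hterm, Finset.sum_add_distrib, Finset.sum_const, Finset.card_range]
    abel
  have hnorm : ((n:ℝ)+1) * ‖X ^ n‖ = ‖(n + 1) • X ^ n‖ := by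
    rw [← Nat.cast_smul_eq_nsmul ℝ, norm_smul]
    simp [Real.norm_eq_abs, abs_of_nonneg (by positivity : (0:ℝ) ≤ (n:ℝ)+1)]
  have h4 : ‖∑ k ∈ Finset.range (n+1), X ^ k * e * X ^ (n - k)‖ ≤ ((n:ℝ)+1) * ε * ‖X‖ ^ n := by
    calc ‖∑ k ∈ Finset.range (n+1), X ^ k * e * X ^ (n - k)‖
        ≤ ∑ k ∈ Finset.range (n+1), ‖X ^ k * e * X ^ (n - k)‖ := norm_sum_le _ _
      _ ≤ ∑ k ∈ Finset.range (n+1), ε * ‖X‖ ^ n := by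
          apply Finset.sum_le_sum
          intro k hk
          rw [Finset.mem_range] at hk
          have hε0 : (0:ℝ) ≤ ε := le_trans (norm_nonneg _) h
          calc ‖X ^ k * e * X ^ (n - k)‖
              ≤ ‖X ^ k‖ * ‖e‖ * ‖X ^ (n-k)‖ :=
                le_trans (norm_mul_le _ _) (by gcongr; exact norm_mul_le _ _)
            _ ≤ ‖X‖ ^ k * ε * ‖X‖ ^ (n - k) := by
                have hε0' : (0:ℝ) ≤ ‖e‖ := norm_nonneg _
                have b1 : ‖X ^ k‖ * ‖e‖ ≤ ‖X‖ ^ k * ε :=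
                  mul_le_mul (norm_pow_le _ _) h (norm_nonneg _) (by positivity)
                exact mul_le_mul b1 (norm_pow_le _ _) (norm_nonneg _) (by positivity)
            _ = ε * (‖X‖ ^ k * ‖X‖ ^ (n - k)) := by ring
            _ = ε * ‖X‖ ^ n := by rw [← pow_add]; congr 2; omega
      _ = ((n:ℝ)+1) * ε * ‖X‖ ^ n := by rw [Finset.sum_const, Finset.card_range]; ring
  calc ((n:ℝ)+1) * ‖X ^ n‖ = ‖(n + 1) • X ^ n‖ := hnorm
    _ = ‖(D * X ^ (n+1) - X ^ (n+1) * D) - ∑ k ∈ Finset.range (n+1), X ^ k * e * X ^ (n - k)‖ := by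
        rw [key]
    _ ≤ ‖D * X ^ (n+1) - X ^ (n+1) * D‖ + ‖∑ k ∈ Finset.range (n+1), X ^ k * e * X ^ (n - k)‖ :=
        norm_sub_le _ _
    _ ≤ 2 * ‖D‖ * ‖X ^ (n+1)‖ + ((n : ℝ) + 1) * ε * ‖X‖ ^ n := by
        gcongr
        calc ‖D * X ^ (n+1) - X ^ (n+1) * D‖ ≤ ‖D * X ^ (n+1)‖ + ‖X ^ (n+1) * D‖ := norm_sub_le _ _
          _ ≤ ‖D‖ * ‖X ^ (n+1)‖ + ‖X ^ (n+1)‖ * ‖D‖ := by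
              gcongr <;> exact norm_mul_le _ _
          _ = 2 * ‖D‖ * ‖X ^ (n+1)‖ := by ring

lemma key_ind {A : Type*} [NormedRing A] [NormedAlgebra ℂ A] [NormOneClass A]
    (D X : A) (ε : ℝ) (h : ‖D * X - X * D - 1‖ ≤ ε) (n : ℕ) :
    1 ≤ ε * ∑ k ∈ Finset.range n, (2 * (‖D‖ * ‖X‖)) ^ k / k.factorial
        + (2 * ‖D‖) ^ n / n.factorial * ‖X ^ n‖ := by
  have hε0 : (0:ℝ) ≤ ε := le_trans (norm_nonneg _) h
  induction n with
  | zero => simp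
  | succ n ih =>
    have star := star_est D X ε h n
    have hfac : ((n+1).factorial : ℝ) = ((n:ℝ)+1) * n.factorial := by
      rw [Nat.factorial_succ]; push_cast; ring
    have hfn : (0:ℝ) < n.factorial := by exact_mod_cast n.factorial_pos
    -- multiply star by (2‖D‖)^n / (n+1)!
    have hstep : (2 * ‖D‖) ^ n / n.factorial * ‖X ^ n‖
        ≤ ε * (2 * (‖D‖ * ‖X‖)) ^ n / n.factorial
          + (2 * ‖D‖) ^ (n+1) / (n+1).factorial * ‖X ^ (n+1)‖ := by
      set c := (2 * ‖D‖) ^ n with hcdef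
      have hn1 : (0:ℝ) < (n:ℝ)+1 := by positivity
      have hc : (0:ℝ) ≤ c / (((n:ℝ)+1) * n.factorial) := by positivity
      have hmul := mul_le_mul_of_nonneg_left star hc
      have e1 : c / (((n:ℝ)+1) * n.factorial) * (((n:ℝ)+1) * ‖X ^ n‖) = c / n.factorial * ‖X ^ n‖ := by
        field_simp
      have e2 : c / (((n:ℝ)+1) * n.factorial)
            * (2 * ‖D‖ * ‖X ^ (n+1)‖ + ((n:ℝ)+1) * ε * ‖X‖ ^ n)
          = (2 * ‖D‖) * c / (((n:ℝ)+1) * n.factorial) * ‖X ^ (n+1)‖ + ε * (c * ‖X‖ ^ n) / n.factorial := by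
        field_simp
      rw [e1, e2] at hmul
      have hMX : (2 * (‖D‖ * ‖X‖)) ^ n = c * ‖X‖ ^ n := by
        rw [hcdef, ← mul_pow]; ring_nf
      have hpow : (2 * ‖D‖) ^ (n+1) = 2 * ‖D‖ * c := by rw [hcdef, pow_succ]; ring
      rw [hfac, hMX, hpow]
      calc c / ↑n.factorial * ‖X ^ n‖
          ≤ 2 * ‖D‖ * c / ((↑n + 1) * ↑n.factorial) * ‖X ^ (n + 1)‖ + ε * (c * ‖X‖ ^ n) / ↑n.factorial := hmul
        _ = ε * (c * ‖X‖ ^ n) / ↑n.factorial + 2 * ‖D‖ * c / ((↑n + 1) * ↑n.factorial) * ‖X ^ (n + 1)‖ := by ring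
    calc (1:ℝ) ≤ ε * ∑ k ∈ Finset.range n, (2 * (‖D‖ * ‖X‖)) ^ k / k.factorial
        + (2 * ‖D‖) ^ n / n.factorial * ‖X ^ n‖ := ih
      _ ≤ ε * ∑ k ∈ Finset.range n, (2 * (‖D‖ * ‖X‖)) ^ k / k.factorial
          + (ε * (2 * (‖D‖ * ‖X‖)) ^ n / n.factorial
            + (2 * ‖D‖) ^ (n+1) / (n+1).factorial * ‖X ^ (n+1)‖) := by linarith
      _ = ε * ∑ k ∈ Finset.range (n+1), (2 * (‖D‖ * ‖X‖)) ^ k / k.factorial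
          + (2 * ‖D‖) ^ (n+1) / (n+1).factorial * ‖X ^ (n+1)‖ := by
          rw [Finset.sum_range_succ]; ring

/-- Popa's quantitative Wintner–Wielandt theorem: if `‖[D,X] - 1‖ ≤ ε` then
`‖D‖‖X‖ ≥ (1/2) log (1/ε)`. -/
theorem popa_lower_bound {A : Type*} [NormedRing A] [NormedAlgebra ℂ A] [CompleteSpace A]
    [NormOneClass A] (D X : A) (ε : ℝ) (hε : 0 < ε)
    (h : ‖D * X - X * D - 1‖ ≤ ε) :
    (1 / 2) * Real.log (1 / ε) ≤ ‖D‖ * ‖X‖ := by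
  set M := ‖D‖ * ‖X‖ with hM
  have hM0 : 0 ≤ M := by positivity
  -- For each n : 1 ≤ ε * exp (2M) + (2M)^n / n!
  have hbound : ∀ n : ℕ, 1 ≤ ε * Real.exp (2 * M) + (2 * M) ^ n / n.factorial := by
    intro n
    have h1 := key_ind D X ε h n
    have h2 : ∑ k ∈ Finset.range n, (2 * M) ^ k / k.factorial ≤ Real.exp (2 * M) :=
      Real.sum_le_exp_of_nonneg (by positivity) n
    have h3 : (2 * ‖D‖) ^ n / n.factorial * ‖X ^ n‖ ≤ (2 * M) ^ n / n.factorial := by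
      have : (2 * ‖D‖) ^ n * ‖X ^ n‖ ≤ (2 * M) ^ n := by
        calc (2 * ‖D‖) ^ n * ‖X ^ n‖ ≤ (2 * ‖D‖) ^ n * ‖X‖ ^ n := by
              gcongr; exact norm_pow_le _ _
          _ = (2 * M) ^ n := by rw [hM, ← mul_pow]; ring_nf
      have hfn : (0:ℝ) < n.factorial := by exact_mod_cast n.factorial_pos
      rw [div_mul_eq_mul_div]
      exact div_le_div_of_nonneg_right this hfn.le |>.trans_eq rfl
    calc (1:ℝ) ≤ ε * ∑ k ∈ Finset.range n, (2 * M) ^ k / k.factorial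
        + (2 * ‖D‖) ^ n / n.factorial * ‖X ^ n‖ := h1
      _ ≤ ε * Real.exp (2 * M) + (2 * M) ^ n / n.factorial := by
          have := mul_le_mul_of_nonneg_left h2 hε.le
          linarith
  have hlim : Filter.Tendsto (fun n : ℕ => ε * Real.exp (2 * M) + (2 * M) ^ n / n.factorial)
      Filter.atTop (nhds (ε * Real.exp (2 * M) + 0)) :=
    Filter.Tendsto.const_add _ (FloorSemiring.tendsto_pow_div_factorial_atTop (2 * M))
  have hfinal : 1 ≤ ε * Real.exp (2 * M) := by
    have := ge_of_tendsto' hlim hbound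
    linarith
  have hexp : 1 / ε ≤ Real.exp (2 * M) := by
    rw [div_le_iff₀ hε]
    nlinarith [Real.exp_pos (2 * M)]
  have hlog : Real.log (1 / ε) ≤ 2 * M := by
    rw [Real.log_le_iff_le_exp (by positivity)]; exact hexp
  linarith
end

section
/- In a unital Banach algebra, the identity element 1 cannot be expressed as a commutator: there do not exist elements D, X with DX - XD = 1. (Wintner–Wielandt theorem.) -/
/-!
If `D X - X D = 1`, then `D X^(n+1) - X^(n+1) D = (n+1) X^n` for every `n`, and no power of `X`
vanishes (otherwise the identity would force the previous power to vanish, down to `X^0 = 1`).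
Taking norms gives `(n+1) ‖X^n‖ ≤ 2 ‖D‖ ‖X‖ ‖X^n‖`, i.e. `n + 1 ≤ 2 ‖D‖ ‖X‖` for all `n`,
which is absurd.
-/

section Ring

variable {A : Type*} [Ring A] {D X : A}

theorem mul_pow_succ_sub_pow_succ_mul_of_commutator_eq_one (h : D * X - X * D = 1) (n : ℕ) :
    D * X ^ (n + 1) - X ^ (n + 1) * D = (n + 1) • X ^ n := by
  induction n with
  | zero => simpa using h
  | succ n ih =>
    have leibniz : D * X ^ (n + 2) - X ^ (n + 2) * D
        = (D * X ^ (n + 1) - X ^ (n + 1) * D) * X + X ^ (n + 1) * (D * X - X * D) := by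
      rw [pow_succ]; noncomm_ring
    rw [leibniz, ih, h, smul_mul_assoc, ← pow_succ, mul_one, succ_nsmul _ (n + 1)]

theorem pow_ne_zero_of_commutator_eq_one [Nontrivial A] [IsAddTorsionFree A]
    (h : D * X - X * D = 1) (n : ℕ) : X ^ n ≠ 0 := by
  induction n with
  | zero => simp
  | succ n ih =>
    intro hzero
    have hsmul := mul_pow_succ_sub_pow_succ_mul_of_commutator_eq_one h n
    rw [hzero, mul_zero, zero_mul, sub_zero, eq_comm] at hsmul
    exact ih ((nsmul_eq_zero_iff_right n.succ_ne_zero).mp hsmul)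

end Ring

theorem natCast_add_one_le_of_commutator_eq_one {A : Type*} [NormedRing A] [NormedSpace ℝ A]
    {D X : A} (h : D * X - X * D = 1) (n : ℕ) (hX : X ^ n ≠ 0) :
    (n + 1 : ℝ) ≤ 2 * ‖D‖ * ‖X‖ := by
  have hpow : ‖X ^ (n + 1)‖ ≤ ‖X‖ * ‖X ^ n‖ := by
    rw [pow_succ']; exact norm_mul_le _ _
  have hbound : (n + 1 : ℝ) * ‖X ^ n‖ ≤ 2 * ‖D‖ * ‖X‖ * ‖X ^ n‖ :=
    calc (n + 1 : ℝ) * ‖X ^ n‖ = ‖(n + 1) • X ^ n‖ := by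
          rw [RCLike.norm_nsmul ℝ, nsmul_eq_mul, Nat.cast_succ]
      _ = ‖D * X ^ (n + 1) - X ^ (n + 1) * D‖ := by
          rw [mul_pow_succ_sub_pow_succ_mul_of_commutator_eq_one h]
      _ ≤ ‖D‖ * ‖X ^ (n + 1)‖ + ‖X ^ (n + 1)‖ * ‖D‖ :=
          (norm_sub_le _ _).trans (add_le_add (norm_mul_le _ _) (norm_mul_le _ _))
      _ ≤ ‖D‖ * (‖X‖ * ‖X ^ n‖) + ‖X‖ * ‖X ^ n‖ * ‖D‖ := by gcongr
      _ = 2 * ‖D‖ * ‖X‖ * ‖X ^ n‖ := by ring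
  exact le_of_mul_le_mul_right hbound (norm_pos_iff.mpr hX)

theorem wintner_wielandt_general {A : Type*} [NormedRing A] [NormedAlgebra ℂ A]
    [NormOneClass A] (D X : A) : D * X - X * D ≠ 1 := by
  intro h
  have : Nontrivial A := NormOneClass.nontrivial
  have : IsAddTorsionFree A := .of_isTorsionFree ℂ A
  obtain ⟨n, hn⟩ := exists_nat_gt (2 * ‖D‖ * ‖X‖)
  have hle := natCast_add_one_le_of_commutator_eq_one h n (pow_ne_zero_of_commutator_eq_one h n)
  linarith

/-- Wintner–Wielandt theorem: in a unital Banach algebra the identity is not a commutator. -/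
theorem wintner_wielandt {A : Type*} [NormedRing A] [NormedAlgebra ℂ A] [CompleteSpace A]
    [NormOneClass A] (D X : A) : D * X - X * D ≠ 1 :=
  wintner_wielandt_general D X
end

section
/- Let n ≥ 1 and let D, X be n×n complex matrices. Then ‖[D,X] - I‖_op ≥ 1, where ‖·‖_op is the operator norm. -/
/-!
The trace of a commutator vanishes, so `[D,X] - 1` has trace `-n`. The trace is the sum of the
`n` eigenvalues, hence some eigenvalue has modulus at least `1`, and the operator norm dominates
the modulus of every eigenvalue.
-/

open Polynomial

theorem Matrix.exists_mem_spectrum_norm_trace_le {𝕜 ι : Type*} [NormedField 𝕜] [IsAlgClosed 𝕜]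
    [Fintype ι] [DecidableEq ι] [Nonempty ι] (A : Matrix ι ι 𝕜) :
    ∃ μ ∈ spectrum 𝕜 A, ‖A.trace‖ ≤ Fintype.card ι * ‖μ‖ := by
  classical
  set roots := A.charpoly.roots
  have hcard : Multiset.card roots = Fintype.card ι := by
    rw [IsAlgClosed.card_roots_eq_natDegree, charpoly_natDegree_eq_dim]
  have hne : roots.toFinset.Nonempty := by
    rw [Multiset.toFinset_nonempty, ← Multiset.card_pos, hcard]
    exact Fintype.card_pos
  obtain ⟨μ, hμ, hmax⟩ := roots.toFinset.exists_max_image (‖·‖) hne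
  rw [Multiset.mem_toFinset] at hμ
  refine ⟨μ, mem_spectrum_iff_isRoot_charpoly.mpr (isRoot_of_mem_roots hμ), ?_⟩
  calc ‖A.trace‖ = ‖roots.sum‖ := by rw [trace_eq_sum_roots_charpoly]
    _ ≤ (roots.map (‖·‖)).sum := norm_multiset_sum_le _
    _ ≤ Multiset.card (roots.map (‖·‖)) • ‖μ‖ := by
      refine Multiset.sum_le_card_nsmul _ _ fun r hr => ?_
      obtain ⟨ν, hν, rfl⟩ := Multiset.mem_map.mp hr
      exact hmax ν (Multiset.mem_toFinset.mpr hν)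
    _ = Fintype.card ι * ‖μ‖ := by rw [Multiset.card_map, hcard, nsmul_eq_mul]

theorem Matrix.trace_commutator_sub_one {R ι : Type*} [CommRing R] [Fintype ι] [DecidableEq ι]
    (D X : Matrix ι ι R) : (D * X - X * D - 1).trace = -Fintype.card ι := by
  rw [trace_sub, trace_sub, trace_mul_comm, sub_self, trace_one, zero_sub]

open scoped Matrix.Norms.L2Operator in
/-- For `n × n` complex matrices, `‖[D,X] - I‖ ≥ 1` in the operator norm. -/
theorem matrix_commutator_dist_ge_one (n : ℕ) (hn : 1 ≤ n)
    (D X : Matrix (Fin n) (Fin n) ℂ) :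
    1 ≤ ‖D * X - X * D - 1‖ := by
  have : Nonempty (Fin n) := Fin.pos_iff_nonempty.mp hn
  obtain ⟨μ, hμ, htrace⟩ := (D * X - X * D - 1).exists_mem_spectrum_norm_trace_le
  rw [Matrix.trace_commutator_sub_one, norm_neg, Complex.norm_natCast, Fintype.card_fin] at htrace
  have hn_pos : (0 : ℝ) < n := by exact_mod_cast hn
  calc 1 ≤ ‖μ‖ := le_of_mul_le_mul_left (by simpa using htrace) hn_pos
    _ ≤ ‖D * X - X * D - 1‖ := spectrum.norm_le_norm_of_mem hμ
end

section
/- Let X, Y be Banach spaces, T, F : X → Y bounded linear operators, G : X × X → Y a bounded bilinear map with ‖G(x,x')‖ ≤ ‖G‖·‖x‖·‖x'‖, and a ∈ Y. Suppose T has a bounded linear right inverse R : Y → X (so T∘R = id_Y). If δ > 0 satisfies δ·(2‖F‖‖R‖ + 4‖G‖‖R‖²‖a‖) < 1, then there exists b ∈ X with ‖b‖ ≤ 2‖R‖‖a‖ solving Tb = a + δF(b) + δG(b,b). -/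
/-- Perturbative solution of `Tb = a + δ F(b) + δ G(b,b)` via the contraction mapping theorem,
given a bounded right inverse `R` of `T`. -/
theorem perturbative_solution {X Y : Type*} [NormedAddCommGroup X] [NormedSpace ℝ X]
    [CompleteSpace X] [NormedAddCommGroup Y] [NormedSpace ℝ Y] [CompleteSpace Y]
    (T F : X →L[ℝ] Y) (G : X →L[ℝ] X →L[ℝ] Y) (a : Y) (R : Y →L[ℝ] X)
    (hR : ∀ y, T (R y) = y) (δ : ℝ) (hδ : 0 < δ)
    (hsmall : δ * (2 * ‖F‖ * ‖R‖ + 4 * ‖G‖ * ‖R‖ ^ 2 * ‖a‖) < 1) :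
    ∃ b : X, ‖b‖ ≤ 2 * ‖R‖ * ‖a‖ ∧ T b = a + δ • F b + δ • G b b := by
  have hF0 : (0:ℝ) ≤ ‖F‖ := norm_nonneg _
  have hR0 : (0:ℝ) ≤ ‖R‖ := norm_nonneg _
  have hG0 : (0:ℝ) ≤ ‖G‖ := ContinuousLinearMap.opNorm_nonneg _
  have ha0 : (0:ℝ) ≤ ‖a‖ := norm_nonneg _
  set S := {c : Y | ‖c‖ ≤ 2 * ‖a‖} with hS
  have hSclosed : IsClosed S := isClosed_le continuous_norm continuous_const
  haveI : CompleteSpace S := hSclosed.completeSpace_coe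
  haveI : Nonempty S := ⟨⟨0, by simp only [hS, Set.mem_setOf_eq, norm_zero]; positivity⟩⟩
  set K : NNReal := ⟨δ * (2 * ‖F‖ * ‖R‖ + 4 * ‖G‖ * ‖R‖ ^ 2 * ‖a‖), by positivity⟩ with hK
  have hmem : ∀ c : Y, c ∈ S → a + δ • F (R c) + δ • G (R c) (R c) ∈ S := by
    intro c hc
    have hc' : ‖c‖ ≤ 2 * ‖a‖ := hc
    have hcs : (0:ℝ) ≤ ‖c‖ := norm_nonneg c
    have hRc : ‖R c‖ ≤ ‖R‖ * ‖c‖ := R.le_opNorm c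
    have h1 : ‖F (R c)‖ ≤ ‖F‖ * (‖R‖ * ‖c‖) :=
      le_trans (F.le_opNorm _) (mul_le_mul_of_nonneg_left hRc hF0)
    have h2 : ‖G (R c) (R c)‖ ≤ ‖G‖ * (‖R‖ * ‖c‖) * (‖R‖ * ‖c‖) := by
      refine le_trans (G.le_opNorm₂ _ _) ?_
      exact mul_le_mul (mul_le_mul_of_nonneg_left hRc hG0) hRc (norm_nonneg _)
        (mul_nonneg hG0 (by positivity))
    have key : ‖a + δ • F (R c) + δ • G (R c) (R c)‖ ≤
        ‖a‖ + δ * (‖F‖ * (‖R‖ * ‖c‖)) + δ * (‖G‖ * (‖R‖ * ‖c‖) * (‖R‖ * ‖c‖)) := by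
      calc ‖a + δ • F (R c) + δ • G (R c) (R c)‖
          ≤ ‖a + δ • F (R c)‖ + ‖δ • G (R c) (R c)‖ := norm_add_le _ _
        _ ≤ ‖a‖ + ‖δ • F (R c)‖ + ‖δ • G (R c) (R c)‖ := by
            have := norm_add_le a (δ • F (R c)); linarith
        _ ≤ ‖a‖ + δ * (‖F‖ * (‖R‖ * ‖c‖)) + δ * (‖G‖ * (‖R‖ * ‖c‖) * (‖R‖ * ‖c‖)) := by
            rw [norm_smul, norm_smul, Real.norm_eq_abs, abs_of_pos hδ]
            have := mul_le_mul_of_nonneg_left h1 hδ.le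
            have := mul_le_mul_of_nonneg_left h2 hδ.le
            linarith
    have e1 : δ * (‖F‖ * (‖R‖ * ‖c‖)) ≤ δ * ‖F‖ * ‖R‖ * (2 * ‖a‖) := by
      nlinarith [mul_nonneg (mul_nonneg (mul_nonneg hδ.le hF0) hR0) (sub_nonneg.2 hc')]
    have e2 : δ * (‖G‖ * (‖R‖ * ‖c‖) * (‖R‖ * ‖c‖)) ≤ δ * ‖G‖ * ‖R‖ ^ 2 * (2 * ‖a‖) ^ 2 := by
      have g : ‖G‖ * (‖R‖ * ‖c‖) * (‖R‖ * ‖c‖) ≤ ‖G‖ * (‖R‖ * (2 * ‖a‖)) * (‖R‖ * (2 * ‖a‖)) := by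
        refine mul_le_mul (mul_le_mul_of_nonneg_left (mul_le_mul_of_nonneg_left hc' hR0) hG0)
          (mul_le_mul_of_nonneg_left hc' hR0) (by positivity) (mul_nonneg hG0 (by positivity))
      have step := mul_le_mul_of_nonneg_left g hδ.le
      have hring : δ * (‖G‖ * (‖R‖ * (2 * ‖a‖)) * (‖R‖ * (2 * ‖a‖)))
          = δ * ‖G‖ * ‖R‖ ^ 2 * (2 * ‖a‖) ^ 2 := by ring
      linarith [hring ▸ step]
    have e3 : δ * ‖F‖ * ‖R‖ * (2 * ‖a‖) + δ * ‖G‖ * ‖R‖ ^ 2 * (2 * ‖a‖) ^ 2 ≤ ‖a‖ := by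
      nlinarith [mul_le_mul_of_nonneg_right hsmall.le ha0]
    show ‖a + δ • F (R c) + δ • G (R c) (R c)‖ ≤ 2 * ‖a‖
    linarith
  set f : S → S := fun c => ⟨a + δ • F (R c) + δ • G (R c) (R c), hmem c c.2⟩ with hf
  have hlip : LipschitzWith K f := by
    apply LipschitzWith.of_dist_le_mul
    rintro ⟨c, hc⟩ ⟨c', hc'⟩
    simp only [hf, Subtype.dist_eq, dist_eq_norm]
    have hcc : ‖c‖ ≤ 2 * ‖a‖ := hc
    have hcc' : ‖c'‖ ≤ 2 * ‖a‖ := hc'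
    have heq : (a + δ • F (R c) + δ • G (R c) (R c)) - (a + δ • F (R c') + δ • G (R c') (R c'))
        = δ • F (R (c - c')) + (δ • G (R c) (R (c - c')) + δ • G (R (c - c')) (R c')) := by
      simp only [map_sub, ContinuousLinearMap.sub_apply]
      module
    rw [heq]
    have hd := R.le_opNorm (c - c')
    have hd0 : (0:ℝ) ≤ ‖c - c'‖ := norm_nonneg _
    have h1 : ‖F (R (c - c'))‖ ≤ ‖F‖ * (‖R‖ * ‖c - c'‖) :=
      le_trans (F.le_opNorm _) (mul_le_mul_of_nonneg_left hd hF0)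
    have h2 : ‖G (R c) (R (c - c'))‖ ≤ ‖G‖ * (‖R‖ * ‖c‖) * (‖R‖ * ‖c - c'‖) := by
      refine le_trans (G.le_opNorm₂ _ _) ?_
      exact mul_le_mul (mul_le_mul_of_nonneg_left (R.le_opNorm c) hG0) hd (norm_nonneg _)
        (mul_nonneg hG0 (by positivity))
    have h3 : ‖G (R (c - c')) (R c')‖ ≤ ‖G‖ * (‖R‖ * ‖c - c'‖) * (‖R‖ * ‖c'‖) := by
      refine le_trans (G.le_opNorm₂ _ _) ?_
      exact mul_le_mul (mul_le_mul_of_nonneg_left hd hG0) (R.le_opNorm c') (norm_nonneg _)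
        (mul_nonneg hG0 (by positivity))
    have hKeval : (K : ℝ) = δ * (2 * ‖F‖ * ‖R‖ + 4 * ‖G‖ * ‖R‖ ^ 2 * ‖a‖) := rfl
    have f1 : δ * ‖F (R (c - c'))‖ ≤ δ * ‖F‖ * ‖R‖ * ‖c - c'‖ := by
      have := mul_le_mul_of_nonneg_left h1 hδ.le; linarith
    have f2 : δ * ‖G (R c) (R (c - c'))‖ ≤ δ * ‖G‖ * ‖R‖ ^ 2 * (2 * ‖a‖) * ‖c - c'‖ := by
      have step1 := mul_le_mul_of_nonneg_left h2 hδ.le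
      have g : ‖G‖ * (‖R‖ * ‖c‖) * (‖R‖ * ‖c - c'‖)
          ≤ ‖G‖ * (‖R‖ * (2 * ‖a‖)) * (‖R‖ * ‖c - c'‖) := by
        refine mul_le_mul_of_nonneg_right ?_ (by positivity)
        exact mul_le_mul_of_nonneg_left (mul_le_mul_of_nonneg_left hcc hR0) hG0
      have step2 := mul_le_mul_of_nonneg_left g hδ.le
      have hring : δ * (‖G‖ * (‖R‖ * (2 * ‖a‖)) * (‖R‖ * ‖c - c'‖))
          = δ * ‖G‖ * ‖R‖ ^ 2 * (2 * ‖a‖) * ‖c - c'‖ := by ring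
      linarith [hring ▸ step2, step1]
    have f3 : δ * ‖G (R (c - c')) (R c')‖ ≤ δ * ‖G‖ * ‖R‖ ^ 2 * (2 * ‖a‖) * ‖c - c'‖ := by
      have step1 := mul_le_mul_of_nonneg_left h3 hδ.le
      have g : ‖G‖ * (‖R‖ * ‖c - c'‖) * (‖R‖ * ‖c'‖)
          ≤ ‖G‖ * (‖R‖ * ‖c - c'‖) * (‖R‖ * (2 * ‖a‖)) := by
        refine mul_le_mul_of_nonneg_left (mul_le_mul_of_nonneg_left hcc' hR0) ?_
        exact mul_nonneg hG0 (by positivity)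
      have step2 := mul_le_mul_of_nonneg_left g hδ.le
      have hring : δ * (‖G‖ * (‖R‖ * ‖c - c'‖) * (‖R‖ * (2 * ‖a‖)))
          = δ * ‖G‖ * ‖R‖ ^ 2 * (2 * ‖a‖) * ‖c - c'‖ := by ring
      linarith [hring ▸ step2, step1]
    have hpos : (0:ℝ) ≤ δ * ‖F‖ * ‖R‖ * ‖c - c'‖ := by positivity
    calc ‖δ • F (R (c - c')) + (δ • G (R c) (R (c - c')) + δ • G (R (c - c')) (R c'))‖
        ≤ ‖δ • F (R (c - c'))‖ + (‖δ • G (R c) (R (c - c'))‖ + ‖δ • G (R (c - c')) (R c')‖) :=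
          le_trans (norm_add_le _ _) (by gcongr; exact norm_add_le _ _)
      _ ≤ (K : ℝ) * ‖c - c'‖ := by
          rw [norm_smul, norm_smul, norm_smul, Real.norm_eq_abs, abs_of_pos hδ, hKeval]
          linarith [f1, f2, f3, hpos]
  have hK1 : K < 1 := by
    rw [← NNReal.coe_lt_coe]
    exact hsmall
  have hcontr : ContractingWith K f := ⟨hK1, hlip⟩
  set c : S := hcontr.fixedPoint f with hc
  have hfix : f c = c := hcontr.fixedPoint_isFixedPt
  have hfix' : a + δ • F (R (c : Y)) + δ • G (R (c : Y)) (R (c : Y)) = (c : Y) :=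
    congrArg Subtype.val hfix
  refine ⟨R (c : Y), ?_, ?_⟩
  · have h := R.le_opNorm (c : Y)
    have hcs : ‖(c : Y)‖ ≤ 2 * ‖a‖ := c.2
    nlinarith
  · rw [hR]
    exact hfix'.symm
end

section
/- Let H be a Hilbert space and u, v ∈ B(H) satisfy u*u = v*v = 1, uu* + vv* = 1, u*v = v*u = 0. Fix n ≥ 2 and define T : B(H)ⁿ → B(H)^{n-1} by T(b₁,...,bₙ) = ([v,b_i] + [u,b_{i-1}])_{i=2}^n. Then T has a bounded linear right inverse R : B(H)^{n-1} → B(H)ⁿ satisfying sup_{1≤i≤n} ‖(Rb)_i‖ ≤ 8√2·n²·sup_{2≤i≤n} ‖b_i‖ for all b = (b_i)_{i=2}^n. -/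
open ContinuousLinearMap Finset
open scoped InnerProductSpace
set_option linter.unusedSectionVars false

noncomputable section AuxRightInv

namespace RightInvAux

variable {H : Type*} [NormedAddCommGroup H] [InnerProductSpace ℂ H] [CompleteSpace H]
variable (u v : H →L[ℂ] H)

/-- a letter: `u` for `true`, `v` for `false` -/
def ltr (b : Bool) : H →L[ℂ] H := bif b then u else v

/-- a word in the two isometries -/
def wrd {m : ℕ} (f : Fin m → Bool) : H →L[ℂ] H := (List.ofFn fun r => ltr u v (f r)).prod

/-- number of `u`'s in a word -/
def dcf {m : ℕ} (f : Fin m → Bool) : ℕ := #(univ.filter fun r => f r = true)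

lemma ltr_star_ltr (hu : star u * u = 1) (hv : star v * v = 1)
    (huv : star u * v = 0) (hvu : star v * u = 0) (b b' : Bool) :
    star (ltr u v b) * ltr u v b' = if b = b' then 1 else 0 := by
  cases b <;> cases b' <;> simp [ltr, hu, hv, huv, hvu]

lemma wrd_cons {m : ℕ} (b : Bool) (f : Fin m → Bool) :
    wrd u v (Fin.cons b f) = ltr u v b * wrd u v f := by
  simp [wrd, List.ofFn_succ, Fin.cons_zero, Fin.cons_succ]

lemma dcf_cons {m : ℕ} (b : Bool) (f : Fin m → Bool) :
    dcf (Fin.cons b f) = (if b = true then 1 else 0) + dcf f := by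
  simp only [dcf, card_filter, Fin.sum_univ_succ, Fin.cons_zero, Fin.cons_succ]

lemma dcf_le {m : ℕ} (f : Fin m → Bool) : dcf f ≤ m := by
  classical
  refine (Finset.card_filter_le _ _).trans_eq ?_
  simp

lemma wrd_star_self (hu : star u * u = 1) (hv : star v * v = 1) :
    ∀ {m : ℕ} (f : Fin m → Bool), star (wrd u v f) * wrd u v f = 1 := by
  intro m
  induction m with
  | zero => intro f; simp [wrd]
  | succ m ih =>
    intro f
    rw [← Fin.cons_self_tail f, wrd_cons, star_mul, mul_assoc,
      ← mul_assoc (star (ltr u v (f 0)))]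
    have : star (ltr u v (f 0)) * ltr u v (f 0) = 1 := by
      cases hb : f 0 <;> simp [ltr, hu, hv]
    rw [this, one_mul, ih]

lemma wrd_star_ne (hu : star u * u = 1) (hv : star v * v = 1)
    (huv : star u * v = 0) (hvu : star v * u = 0) :
    ∀ {m : ℕ} (f g : Fin m → Bool), f ≠ g → star (wrd u v f) * wrd u v g = 0 := by
  intro m
  induction m with
  | zero => intro f g hfg; exact absurd (funext fun x => x.elim0) hfg
  | succ m ih =>
    intro f g hfg
    rw [← Fin.cons_self_tail f, ← Fin.cons_self_tail g, wrd_cons, wrd_cons, star_mul,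
      mul_assoc, ← mul_assoc (star (ltr u v (f 0))), ltr_star_ltr u v hu hv huv hvu]
    by_cases hb : f 0 = g 0
    · have ht : Fin.tail f ≠ Fin.tail g := by
        intro ht
        exact hfg (by rw [← Fin.cons_self_tail f, ← Fin.cons_self_tail g, hb, ht])
      rw [if_pos hb, one_mul, ih _ _ ht]
    · rw [if_neg hb, zero_mul, mul_zero]

lemma sum_wrd_mul_star (hsum : u * star u + v * star v = 1) :
    ∀ m : ℕ, ∑ f : Fin m → Bool, wrd u v f * star (wrd u v f) = 1 := by
  intro m
  induction m with
  | zero =>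
    rw [Fintype.sum_unique]
    simp [wrd]
  | succ m ih =>
    rw [← Fintype.sum_equiv (Fin.consEquiv fun _ => Bool)
      (fun p : Bool × (Fin m → Bool) =>
        wrd u v (Fin.cons p.1 p.2) * star (wrd u v (Fin.cons p.1 p.2)))
      (fun F => wrd u v F * star (wrd u v F)) (fun p => by rfl)]
    rw [Fintype.sum_prod_type]
    have : ∀ b : Bool, (∑ f : Fin m → Bool,
        wrd u v (Fin.cons b f) * star (wrd u v (Fin.cons b f)))
        = ltr u v b * star (ltr u v b) := by
      intro b
      have : ∀ f : Fin m → Bool,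
          wrd u v (Fin.cons b f) * star (wrd u v (Fin.cons b f))
          = ltr u v b * (wrd u v f * star (wrd u v f)) * star (ltr u v b) := by
        intro f
        rw [wrd_cons, star_mul]
        simp [mul_assoc]
      rw [Finset.sum_congr rfl fun f _ => this f, ← Finset.sum_mul, ← Finset.mul_sum, ih,
        mul_one]
    rw [Fintype.sum_bool]
    rw [this true, this false]
    simpa [ltr] using hsum

lemma card_dcf (m δ : ℕ) :
    #(univ.filter fun f : Fin m → Bool => dcf f = δ) = m.choose δ := by
  classical
  have hpc : #(Finset.powersetCard δ (univ : Finset (Fin m))) = m.choose δ := by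
    rw [Finset.card_powersetCard]; simp
  rw [← hpc]
  apply Finset.card_bij' (i := fun f _ => univ.filter fun r => f r = true)
    (j := fun s _ => fun r => decide (r ∈ s))
  case hi =>
    intro f hf
    rw [Finset.mem_powersetCard_univ]
    exact (Finset.mem_filter.mp hf).2
  case hj =>
    intro s hs
    rw [Finset.mem_filter]
    refine ⟨Finset.mem_univ _, ?_⟩
    rw [Finset.mem_powersetCard_univ] at hs
    rw [← hs]
    unfold dcf
    congr 1
    ext r
    simp
  case left_inv =>
    intro f hf
    funext r
    simp
  case right_inv =>
    intro s hs
    ext r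
    simp


/-- right-multiplication primitive -/
def sg (x : ℤ → H →L[ℂ] H) : ℤ → H →L[ℂ] H :=
  fun j => x j * star v + x (j + 1) * star u

/-- transfer operator -/
def Pm (x : ℤ → H →L[ℂ] H) : ℤ → H →L[ℂ] H :=
  fun i => v * sg u v x i + u * sg u v x (i - 1)

lemma le_of_sq_le_sq' {a b : ℝ} (hb : 0 ≤ b) (h : a ^ 2 ≤ b ^ 2) (ha : 0 ≤ a) : a ≤ b := by
  by_contra hab
  push_neg at hab
  nlinarith

lemma key_alg (hu : star u * u = 1) (hv : star v * v = 1)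
    (huv : star u * v = 0) (hvu : star v * u = 0) (x : ℤ → H →L[ℂ] H) (i : ℤ) :
    (v * sg u v x i - sg u v x i * v) + (u * sg u v x (i - 1) - sg u v x (i - 1) * u)
      = Pm u v x i - x i - x i := by
  have e1 : sg u v x i * v = x i := by
    simp [sg, add_mul, mul_assoc, hv, huv]
  have e2 : sg u v x (i - 1) * u = x i := by
    simp [sg, add_mul, mul_assoc, hu, hvu]
  rw [e1, e2]
  simp only [Pm]
  abel

/-- partial-sum approximate primitive -/
def bsq (m : ℕ) (x : ℤ → H →L[ℂ] H) : ℤ → H →L[ℂ] H :=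
  fun j => -∑ k ∈ range m, ((2 : ℂ)⁻¹) ^ (k + 1) • sg u v ((Pm u v)^[k] x) j

lemma tele (hu : star u * u = 1) (hv : star v * v = 1)
    (huv : star u * v = 0) (hvu : star v * u = 0) (x : ℤ → H →L[ℂ] H) (m : ℕ) (i : ℤ) :
    (v * bsq u v m x i - bsq u v m x i * v)
      + (u * bsq u v m x (i - 1) - bsq u v m x (i - 1) * u)
      = x i - ((2 : ℂ)⁻¹) ^ m • (Pm u v)^[m] x i := by
  induction m with
  | zero =>
    simp [bsq]
  | succ m ih =>
    have hb : ∀ j, bsq u v (m + 1) x j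
        = bsq u v m x j - ((2 : ℂ)⁻¹) ^ (m + 1) • sg u v ((Pm u v)^[m] x) j := by
      intro j
      simp only [bsq, Finset.sum_range_succ, neg_add, ← sub_eq_add_neg]
    have hK := key_alg u v hu hv huv hvu ((Pm u v)^[m] x) i
    have goal2 : (v * bsq u v (m+1) x i - bsq u v (m+1) x i * v)
        + (u * bsq u v (m+1) x (i - 1) - bsq u v (m+1) x (i - 1) * u)
        = ((v * bsq u v m x i - bsq u v m x i * v)
            + (u * bsq u v m x (i-1) - bsq u v m x (i-1) * u))
          - ((2:ℂ)⁻¹)^(m+1) • ((v * sg u v ((Pm u v)^[m] x) i - sg u v ((Pm u v)^[m] x) i * v)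
            + (u * sg u v ((Pm u v)^[m] x) (i-1) - sg u v ((Pm u v)^[m] x) (i-1) * u)) := by
      rw [hb, hb]
      simp only [mul_sub, sub_mul, mul_smul_comm, smul_mul_assoc, smul_add, smul_sub]
      match_scalars <;> ring
    rw [goal2, ih, hK, Function.iterate_succ_apply']
    have harith : ((2:ℂ)⁻¹)^(m+1) + ((2:ℂ)⁻¹)^(m+1) = ((2:ℂ)⁻¹)^m := by
      rw [pow_succ]
      ring
    match_scalars <;> simp only [← harith] <;> ring

section NormBounds

lemma isom_apply (w : H →L[ℂ] H) (hw : star w * w = 1) (a : H) : ‖w a‖ = ‖a‖ := by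
  have h2 : ⟪w a, w a⟫_ℂ = ⟪a, a⟫_ℂ := by
    rw [← adjoint_inner_right w, ← star_eq_adjoint, ← ContinuousLinearMap.mul_apply, hw,
      ContinuousLinearMap.one_apply]
  have h3 := congrArg RCLike.re h2
  rw [inner_self_eq_norm_sq, inner_self_eq_norm_sq] at h3
  calc ‖w a‖ = Real.sqrt (‖w a‖ ^ 2) := (Real.sqrt_sq (norm_nonneg _)).symm
    _ = Real.sqrt (‖a‖ ^ 2) := by rw [h3]
    _ = ‖a‖ := Real.sqrt_sq (norm_nonneg _)

lemma cross_zero (hvu : star v * u = 0) (a b : H) : ⟪v a, u b⟫_ℂ = 0 := by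
  rw [← adjoint_inner_right v, ← star_eq_adjoint, ← ContinuousLinearMap.mul_apply, hvu]
  simp

lemma apply_norm_sq_orth (hu : star u * u = 1) (hv : star v * v = 1)
    (hvu : star v * u = 0) (y y' : H →L[ℂ] H) (ξ : H) :
    ‖(v * y + u * y') ξ‖ ^ 2 = ‖y ξ‖ ^ 2 + ‖y' ξ‖ ^ 2 := by
  have happ : (v * y + u * y') ξ = v (y ξ) + u (y' ξ) := by
    simp [ContinuousLinearMap.add_apply, ContinuousLinearMap.mul_apply]
  rw [happ, norm_add_sq (𝕜 := ℂ), cross_zero u v hvu]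
  simp [isom_apply v hv, isom_apply u hu]

lemma norm_vu_le (hu : star u * u = 1) (hv : star v * v = 1)
    (hvu : star v * u = 0) (y y' : H →L[ℂ] H) {M : ℝ} (hy : ‖y‖ ≤ M) (hy' : ‖y'‖ ≤ M) :
    ‖v * y + u * y'‖ ≤ Real.sqrt 2 * M := by
  have hM : 0 ≤ M := le_trans (norm_nonneg y) hy
  have hs2 : Real.sqrt 2 ^ 2 = 2 := Real.sq_sqrt (by norm_num)
  apply opNorm_le_bound _ (by positivity)
  intro ξ
  have hsq := apply_norm_sq_orth u v hu hv hvu y y' ξ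
  have b1 : ‖y ξ‖ ≤ M * ‖ξ‖ :=
    (le_opNorm y ξ).trans (mul_le_mul_of_nonneg_right hy (norm_nonneg ξ))
  have b2 : ‖y' ξ‖ ≤ M * ‖ξ‖ :=
    (le_opNorm y' ξ).trans (mul_le_mul_of_nonneg_right hy' (norm_nonneg ξ))
  apply le_of_sq_le_sq' (by positivity) _ (norm_nonneg _)
  rw [hsq]
  nlinarith [norm_nonneg (y ξ), norm_nonneg (y' ξ), norm_nonneg ξ, sq_nonneg (M * ‖ξ‖)]

lemma norm_sg_le (hu : star u * u = 1) (hv : star v * v = 1)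
    (hvu : star v * u = 0) (x : ℤ → H →L[ℂ] H) {M : ℝ} (hx : ∀ i, ‖x i‖ ≤ M) (j : ℤ) :
    ‖sg u v x j‖ ≤ Real.sqrt 2 * M := by
  have hst : sg u v x j = star (v * star (x j) + u * star (x (j + 1))) := by
    simp [sg, star_add, star_mul, star_star]
  rw [hst, norm_star]
  exact norm_vu_le u v hu hv hvu _ _ (by rw [norm_star]; exact hx j)
    (by rw [norm_star]; exact hx (j + 1))

lemma norm_Pm_le (hu : star u * u = 1) (hv : star v * v = 1)
    (hvu : star v * u = 0) (x : ℤ → H →L[ℂ] H) {M : ℝ} (hx : ∀ i, ‖x i‖ ≤ M) (i : ℤ) :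
    ‖Pm u v x i‖ ≤ 2 * M := by
  have h1 := norm_sg_le u v hu hv hvu x hx i
  have h2 := norm_sg_le u v hu hv hvu x hx (i - 1)
  have h3 := norm_vu_le u v hu hv hvu _ _ h1 h2
  rw [← mul_assoc, Real.mul_self_sqrt (by norm_num : (0:ℝ) ≤ 2)] at h3
  exact h3

lemma norm_Pm_iter_le (hu : star u * u = 1) (hv : star v * v = 1)
    (hvu : star v * u = 0) (x : ℤ → H →L[ℂ] H) {M : ℝ} (hx : ∀ i, ‖x i‖ ≤ M) :
    ∀ (k : ℕ) (i : ℤ), ‖(Pm u v)^[k] x i‖ ≤ 2 ^ k * M := by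
  intro k
  induction k with
  | zero => intro i; simpa using hx i
  | succ k ih =>
    intro i
    rw [Function.iterate_succ_apply']
    calc ‖Pm u v ((Pm u v)^[k] x) i‖ ≤ 2 * (2 ^ k * M) :=
          norm_Pm_le u v hu hv hvu ((Pm u v)^[k] x) ih i
      _ = 2 ^ (k + 1) * M := by ring

end NormBounds


lemma sum_split {M : Type*} [AddCommMonoid M] {m : ℕ} (φ : (Fin (m+1) → Bool) → M) :
    ∑ F : Fin (m+1) → Bool, φ F = ∑ b : Bool, ∑ f : Fin m → Bool, φ (Fin.cons b f) := by
  rw [← (Fintype.sum_equiv (Fin.consEquiv fun _ => Bool)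
    (fun p => φ (Fin.cons p.1 p.2)) φ (fun p => rfl))]
  exact Fintype.sum_prod_type _

lemma Pm_iter_formula (x : ℤ → H →L[ℂ] H) :
    ∀ (m : ℕ) (i : ℤ), (Pm u v)^[m] x i
      = ∑ f : Fin m → Bool, ∑ g : Fin m → Bool,
          wrd u v f * x (i - (dcf f : ℤ) + (dcf g : ℤ)) * star (wrd u v g) := by
  intro m
  induction m with
  | zero =>
    intro i
    rw [Fintype.sum_unique, Fintype.sum_unique]
    simp [wrd, dcf]
  | succ m ih =>
    intro i
    rw [Function.iterate_succ_apply']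
    have hblock : ∀ (b b' : Bool) (k : ℤ),
        (∀ f g : Fin m → Bool,
          (i - (dcf (Fin.cons b f) : ℤ) + (dcf (Fin.cons b' g) : ℤ))
            = k - (dcf f : ℤ) + (dcf g : ℤ)) →
        (∑ f : Fin m → Bool, ∑ g : Fin m → Bool,
            wrd u v (Fin.cons b f) * x (i - (dcf (Fin.cons b f) : ℤ) + (dcf (Fin.cons b' g) : ℤ))
              * star (wrd u v (Fin.cons b' g)))
          = ltr u v b * ((Pm u v)^[m] x k) * star (ltr u v b') := by
      intro b b' k hk
      rw [ih k]
      simp only [Finset.mul_sum, Finset.sum_mul]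
      refine Finset.sum_congr rfl fun f _ => Finset.sum_congr rfl fun g _ => ?_
      rw [wrd_cons, wrd_cons, star_mul, hk f g]
      simp only [mul_assoc]
    have hL : Pm u v ((Pm u v)^[m] x) i
        = v * ((Pm u v)^[m] x i) * star v + v * ((Pm u v)^[m] x (i+1)) * star u
          + (u * ((Pm u v)^[m] x (i-1)) * star v + u * ((Pm u v)^[m] x i) * star u) := by
      have e : i - 1 + 1 = i := by ring
      simp only [Pm, sg, mul_add, ← mul_assoc, e]
    rw [hL]
    rw [sum_split (fun F => ∑ G : Fin (m+1) → Bool,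
      wrd u v F * x (i - (dcf F : ℤ) + (dcf G : ℤ)) * star (wrd u v G))]
    have hinner : ∀ b : Bool, ∀ f : Fin m → Bool,
        (∑ G : Fin (m+1) → Bool,
          wrd u v (Fin.cons b f) * x (i - (dcf (Fin.cons b f) : ℤ) + (dcf G : ℤ))
            * star (wrd u v G))
        = ∑ b' : Bool, ∑ g : Fin m → Bool,
            wrd u v (Fin.cons b f) * x (i - (dcf (Fin.cons b f) : ℤ) + (dcf (Fin.cons b' g) : ℤ))
              * star (wrd u v (Fin.cons b' g)) :=
      fun b f => sum_split _
    rw [Finset.sum_congr rfl fun b _ => Finset.sum_congr rfl fun f _ => hinner b f]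
    rw [Fintype.sum_bool]
    simp only [Fintype.sum_bool, Finset.sum_add_distrib]
    rw [hblock true true i (fun f g => by simp [dcf_cons] <;> omega),
      hblock true false (i-1) (fun f g => by simp [dcf_cons] <;> omega),
      hblock false true (i+1) (fun f g => by simp [dcf_cons] <;> omega),
      hblock false false i (fun f g => by simp [dcf_cons] <;> omega)]
    simp only [ltr, Bool.cond_true, Bool.cond_false]
    abel

/-- the data placed on positions 1..n -/
def aseq (n : ℕ) (c : Fin n → H →L[ℂ] H) : ℤ → H →L[ℂ] H :=
  fun i => ∑ j : Fin n, if i = (j : ℤ) + 1 then c j else 0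

lemma aseq_eq (n : ℕ) (c : Fin n → H →L[ℂ] H) (j : Fin n) :
    aseq n c ((j : ℤ) + 1) = c j := by
  simp only [aseq]
  rw [Finset.sum_eq_single j]
  · simp
  · intro b _ hbj
    rw [if_neg]
    intro hb
    exact hbj (by ext; omega)
  · intro hj
    exact absurd (Finset.mem_univ j) hj

lemma aseq_norm_le (n : ℕ) (c : Fin n → H →L[ℂ] H) {M : ℝ} (hM : 0 ≤ M)
    (hc : ∀ j, ‖c j‖ ≤ M) : ∀ i : ℤ, ‖aseq n c i‖ ≤ M := by
  intro i
  by_cases hex : ∃ j : Fin n, i = (j : ℤ) + 1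
  · obtain ⟨j, rfl⟩ := hex
    rw [aseq_eq]
    exact hc j
  · have : aseq n c i = 0 := by
      simp only [aseq]
      refine Finset.sum_eq_zero fun j _ => ?_
      rw [if_neg fun h => hex ⟨j, h⟩]
    rw [this, norm_zero]
    exact hM

/-- fiber of words with given number of `u`'s -/
def fib (m : ℕ) (δ : ℤ) : Finset (Fin m → Bool) :=
  univ.filter fun g => (dcf g : ℤ) = δ

def BB (m : ℕ) (δ : ℤ) : H →L[ℂ] H := ∑ g ∈ fib m δ, star (wrd u v g)

def zz (n : ℕ) (c : Fin n → H →L[ℂ] H) (m : ℕ) (i : ℤ) (f : Fin m → Bool) : H →L[ℂ] H :=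
  ∑ j : Fin n, c j * BB u v m ((j : ℤ) + 1 - i + (dcf f : ℤ))

lemma stepA_inner (n : ℕ) (c : Fin n → H →L[ℂ] H) (m : ℕ) (i : ℤ) (df : ℕ) :
    ∑ g : Fin m → Bool, aseq n c (i - (df : ℤ) + (dcf g : ℤ)) * star (wrd u v g)
      = ∑ j : Fin n, c j * BB u v m ((j : ℤ) + 1 - i + (df : ℤ)) := by
  have lhs_eq : ∀ g : Fin m → Bool,
      aseq n c (i - (df : ℤ) + (dcf g : ℤ)) * star (wrd u v g)
      = ∑ j : Fin n, (if (dcf g : ℤ) = (j:ℤ)+1-i+(df:ℤ) then c j * star (wrd u v g) else 0) := by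
    intro g
    simp only [aseq]
    rw [Finset.sum_mul]
    refine Finset.sum_congr rfl fun j _ => ?_
    rw [ite_mul, zero_mul]
    exact if_congr (by omega) rfl rfl
  rw [Finset.sum_congr rfl fun g _ => lhs_eq g, Finset.sum_comm]
  refine Finset.sum_congr rfl fun j _ => ?_
  simp only [BB, fib]
  rw [Finset.mul_sum, ← Finset.sum_filter]

lemma stepA (n : ℕ) (c : Fin n → H →L[ℂ] H) (m : ℕ) (i : ℤ) :
    (Pm u v)^[m] (aseq n c) i = ∑ f : Fin m → Bool, wrd u v f * zz u v n c m i f := by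
  rw [Pm_iter_formula]
  refine Finset.sum_congr rfl fun f _ => ?_
  simp only [mul_assoc]
  rw [← Finset.mul_sum, stepA_inner u v n c m i (dcf f)]
  rfl

lemma fib_card_le (t : ℕ) (δ : ℤ) :
    (#(fib (m := 2*t) δ) : ℝ) ≤ ((2*t).choose t : ℝ) := by
  by_cases h : ∃ d : ℕ, δ = (d : ℤ)
  · obtain ⟨d, rfl⟩ := h
    have he : fib (m := 2*t) (d : ℤ) = univ.filter fun f : Fin (2*t) → Bool => dcf f = d := by
      simp only [fib]
      congr 1
      funext g
      simp [Nat.cast_inj]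
    rw [he, card_dcf]
    have h2 : (2*t).choose d ≤ (2*t).choose t := by
      have h3 := Nat.choose_le_middle d (2*t)
      rwa [show (2*t)/2 = t by omega] at h3
    exact_mod_cast h2
  · have he : fib (m := 2*t) δ = ∅ := by
      rw [fib, Finset.filter_eq_empty_iff]
      intro g _
      exact fun hc => h ⟨dcf g, hc.symm⟩
    rw [he]
    simp

lemma main_est (hu : star u * u = 1) (hv : star v * v = 1) (huv : star u * v = 0)
    (hvu : star v * u = 0) (hsum : u * star u + v * star v = 1)
    (t n : ℕ) (c : Fin n → H →L[ℂ] H) {M : ℝ} (hM : 0 ≤ M) (hc : ∀ j, ‖c j‖ ≤ M) (i : ℤ) :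
    ‖(Pm u v)^[2*t] (aseq n c) i‖ ≤ (n : ℝ) * ((2*t).choose t : ℝ) * M := by
  set m := 2*t with hm
  set KK : ℝ := (((2*t).choose t : ℕ) : ℝ) with hKK
  have hK0 : (0:ℝ) ≤ KK := Nat.cast_nonneg _
  -- total mass of word ranges
  have hq : ∀ ξ : H, ∑ g : Fin m → Bool, ‖(star (wrd u v g)) ξ‖^2 = ‖ξ‖^2 := by
    intro ξ
    have hterm : ∀ g : Fin m → Bool, ‖(star (wrd u v g)) ξ‖^2
        = RCLike.re ⟪ξ, (wrd u v g * star (wrd u v g)) ξ⟫_ℂ := by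
      intro g
      rw [← inner_self_eq_norm_sq (𝕜 := ℂ)]
      congr 1
      rw [star_eq_adjoint, adjoint_inner_left, ← ContinuousLinearMap.mul_apply, ← star_eq_adjoint]
    rw [Finset.sum_congr rfl fun g _ => hterm g, ← map_sum, ← inner_sum,
      ← ContinuousLinearMap.sum_apply, sum_wrd_mul_star u v hsum m,
      ContinuousLinearMap.one_apply, inner_self_eq_norm_sq]
  -- single fiber operator bound
  have hBB : ∀ (δ : ℤ) (ξ : H), ‖BB u v m δ ξ‖^2
      ≤ KK * ∑ g ∈ fib m δ, ‖(star (wrd u v g)) ξ‖^2 := by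
    intro δ ξ
    have h1 : ‖BB u v m δ ξ‖ ≤ ∑ g ∈ fib m δ, ‖(star (wrd u v g)) ξ‖ := by
      simp only [BB]
      rw [ContinuousLinearMap.sum_apply]
      exact norm_sum_le _ _
    have h2 : (∑ g ∈ fib m δ, ‖(star (wrd u v g)) ξ‖)^2
        ≤ (#(fib m δ) : ℝ) * ∑ g ∈ fib m δ, ‖(star (wrd u v g)) ξ‖^2 := by
      have h4 := sum_mul_sq_le_sq_mul_sq (fib m δ) (fun _ => (1:ℝ))
        (fun g => ‖(star (wrd u v g)) ξ‖)
      simpa using h4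
    have h3 : (#(fib m δ) : ℝ) ≤ KK := fib_card_le t δ
    calc ‖BB u v m δ ξ‖^2 ≤ (∑ g ∈ fib m δ, ‖(star (wrd u v g)) ξ‖)^2 :=
          pow_le_pow_left₀ (norm_nonneg _) h1 2
      _ ≤ (#(fib m δ) : ℝ) * ∑ g ∈ fib m δ, ‖(star (wrd u v g)) ξ‖^2 := h2
      _ ≤ KK * ∑ g ∈ fib m δ, ‖(star (wrd u v g)) ξ‖^2 :=
          mul_le_mul_of_nonneg_right h3 (Finset.sum_nonneg fun g _ => sq_nonneg _)
  have hmain : ∀ ξ : H, ‖((Pm u v)^[m] (aseq n c) i) ξ‖ ≤ ((n:ℝ) * KK * M) * ‖ξ‖ := by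
    intro ξ
    have happly : ((Pm u v)^[m] (aseq n c) i) ξ
        = ∑ f : Fin m → Bool, wrd u v f ((zz u v n c m i f) ξ) := by
      rw [stepA u v n c m i, ContinuousLinearMap.sum_apply]
      exact Finset.sum_congr rfl fun f _ => rfl
    have hB : ‖((Pm u v)^[m] (aseq n c) i) ξ‖^2
        = ∑ f : Fin m → Bool, ‖(zz u v n c m i f) ξ‖^2 := by
      rw [happly, ← inner_self_eq_norm_sq (𝕜 := ℂ), sum_inner]
      have key : ∀ f : Fin m → Bool,
          ⟪wrd u v f ((zz u v n c m i f) ξ), ∑ g : Fin m → Bool, wrd u v g ((zz u v n c m i g) ξ)⟫_ℂ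
          = ⟪(zz u v n c m i f) ξ, (zz u v n c m i f) ξ⟫_ℂ := by
        intro f
        rw [inner_sum]
        rw [Finset.sum_eq_single f]
        · rw [← adjoint_inner_right (wrd u v f), ← star_eq_adjoint,
            ← ContinuousLinearMap.mul_apply, wrd_star_self u v hu hv f,
            ContinuousLinearMap.one_apply]
        · intro g _ hgf
          rw [← adjoint_inner_right (wrd u v f), ← star_eq_adjoint,
            ← ContinuousLinearMap.mul_apply, wrd_star_ne u v hu hv huv hvu f g ?_]
          · simp
          · exact fun hfg => hgf hfg.symm
        · intro hf
          exact absurd (Finset.mem_univ f) hf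
      rw [Finset.sum_congr rfl fun f _ => key f, map_sum]
      exact Finset.sum_congr rfl fun f _ => inner_self_eq_norm_sq _
    have hCf : ∀ f : Fin m → Bool, ‖(zz u v n c m i f) ξ‖^2
        ≤ (n:ℝ) * M^2 * ∑ j : Fin n, ‖BB u v m ((j:ℤ)+1-i+(dcf f:ℤ)) ξ‖^2 := by
      intro f
      have h1 : ‖(zz u v n c m i f) ξ‖
          ≤ M * ∑ j : Fin n, ‖BB u v m ((j:ℤ)+1-i+(dcf f:ℤ)) ξ‖ := by
        have h0 : (zz u v n c m i f) ξ
            = ∑ j : Fin n, (c j) (BB u v m ((j:ℤ)+1-i+(dcf f:ℤ)) ξ) := by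
          simp only [zz]
          rw [ContinuousLinearMap.sum_apply]
          exact Finset.sum_congr rfl fun j _ => rfl
        rw [h0]
        calc ‖∑ j : Fin n, (c j) (BB u v m ((j:ℤ)+1-i+(dcf f:ℤ)) ξ)‖
            ≤ ∑ j : Fin n, ‖(c j) (BB u v m ((j:ℤ)+1-i+(dcf f:ℤ)) ξ)‖ := norm_sum_le _ _
          _ ≤ ∑ j : Fin n, M * ‖BB u v m ((j:ℤ)+1-i+(dcf f:ℤ)) ξ‖ :=
              Finset.sum_le_sum fun j _ => (le_opNorm _ _).trans
                (mul_le_mul_of_nonneg_right (hc j) (norm_nonneg _))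
          _ = M * ∑ j : Fin n, ‖BB u v m ((j:ℤ)+1-i+(dcf f:ℤ)) ξ‖ := (Finset.mul_sum _ _ _).symm
      have h2 : (∑ j : Fin n, ‖BB u v m ((j:ℤ)+1-i+(dcf f:ℤ)) ξ‖)^2
          ≤ (n:ℝ) * ∑ j : Fin n, ‖BB u v m ((j:ℤ)+1-i+(dcf f:ℤ)) ξ‖^2 := by
        have h4 := sum_mul_sq_le_sq_mul_sq (univ : Finset (Fin n)) (fun _ => (1:ℝ))
          (fun j => ‖BB u v m ((j:ℤ)+1-i+(dcf f:ℤ)) ξ‖)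
        simpa using h4
      calc ‖(zz u v n c m i f) ξ‖^2
          ≤ (M * ∑ j : Fin n, ‖BB u v m ((j:ℤ)+1-i+(dcf f:ℤ)) ξ‖)^2 :=
            pow_le_pow_left₀ (norm_nonneg _) h1 2
        _ = M^2 * (∑ j : Fin n, ‖BB u v m ((j:ℤ)+1-i+(dcf f:ℤ)) ξ‖)^2 := by ring
        _ ≤ M^2 * ((n:ℝ) * ∑ j : Fin n, ‖BB u v m ((j:ℤ)+1-i+(dcf f:ℤ)) ξ‖^2) :=
            mul_le_mul_of_nonneg_left h2 (sq_nonneg M)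
        _ = (n:ℝ) * M^2 * ∑ j : Fin n, ‖BB u v m ((j:ℤ)+1-i+(dcf f:ℤ)) ξ‖^2 := by ring
    have hDj : ∀ j : Fin n,
        (∑ f : Fin m → Bool, ‖BB u v m ((j:ℤ)+1-i+(dcf f:ℤ)) ξ‖^2) ≤ KK * (KK * ‖ξ‖^2) := by
      intro j
      have hcomp : ∑ f : Fin m → Bool, ‖BB u v m ((j:ℤ)+1-i+(dcf f:ℤ)) ξ‖^2
          = ∑ δ ∈ Finset.image (dcf (m := m)) univ,
              #(univ.filter fun f : Fin m → Bool => dcf f = δ) •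
                ‖BB u v m ((j:ℤ)+1-i+(δ:ℤ)) ξ‖^2 :=
        Finset.sum_comp (fun δ : ℕ => ‖BB u v m ((j:ℤ)+1-i+(δ:ℤ)) ξ‖^2) dcf
      have hfibn : ∀ δ : ℕ, (#(univ.filter fun f : Fin m → Bool => dcf f = δ) : ℝ) ≤ KK := by
        intro δ
        rw [card_dcf]
        have h2 : m.choose δ ≤ (2*t).choose t := by
          have h3 := Nat.choose_le_middle δ m
          rwa [show m/2 = t by omega] at h3
        rw [hKK]
        exact_mod_cast h2
      have hstep1 : ∑ f : Fin m → Bool, ‖BB u v m ((j:ℤ)+1-i+(dcf f:ℤ)) ξ‖^2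
          ≤ KK * ∑ δ ∈ Finset.image (dcf (m := m)) univ, ‖BB u v m ((j:ℤ)+1-i+(δ:ℤ)) ξ‖^2 := by
        rw [hcomp, Finset.mul_sum]
        refine Finset.sum_le_sum fun δ _ => ?_
        rw [nsmul_eq_mul]
        exact mul_le_mul_of_nonneg_right (hfibn δ) (sq_nonneg _)
      have hstep2 : ∑ δ ∈ Finset.image (dcf (m := m)) univ, ‖BB u v m ((j:ℤ)+1-i+(δ:ℤ)) ξ‖^2
          ≤ ∑ δ ∈ Finset.range (m+1), ‖BB u v m ((j:ℤ)+1-i+(δ:ℤ)) ξ‖^2 := by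
        refine Finset.sum_le_sum_of_subset_of_nonneg ?_ fun δ _ _ => sq_nonneg _
        intro δ hδ
        rw [Finset.mem_image] at hδ
        obtain ⟨f, _, rfl⟩ := hδ
        rw [Finset.mem_range]
        exact Nat.lt_succ_of_le (dcf_le f)
      have hstep3 : ∑ δ ∈ Finset.range (m+1), ‖BB u v m ((j:ℤ)+1-i+(δ:ℤ)) ξ‖^2
          ≤ KK * ‖ξ‖^2 := by
        have hb : ∀ δ ∈ Finset.range (m+1), ‖BB u v m ((j:ℤ)+1-i+(δ:ℤ)) ξ‖^2
            ≤ KK * ∑ g ∈ fib m ((j:ℤ)+1-i+(δ:ℤ)), ‖(star (wrd u v g)) ξ‖^2 :=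
          fun δ _ => hBB _ ξ
        calc ∑ δ ∈ Finset.range (m+1), ‖BB u v m ((j:ℤ)+1-i+(δ:ℤ)) ξ‖^2
            ≤ ∑ δ ∈ Finset.range (m+1),
                KK * ∑ g ∈ fib m ((j:ℤ)+1-i+(δ:ℤ)), ‖(star (wrd u v g)) ξ‖^2 :=
              Finset.sum_le_sum hb
          _ = KK * ∑ δ ∈ Finset.range (m+1),
                ∑ g ∈ fib m ((j:ℤ)+1-i+(δ:ℤ)), ‖(star (wrd u v g)) ξ‖^2 :=
              (Finset.mul_sum _ _ _).symm
          _ ≤ KK * ‖ξ‖^2 := by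
              refine mul_le_mul_of_nonneg_left ?_ hK0
              have hdis : (↑(Finset.range (m+1)) : Set ℕ).PairwiseDisjoint
                  (fun δ : ℕ => fib (m := m) ((j:ℤ)+1-i+(δ:ℤ))) := by
                intro a _ b _ hab
                refine Finset.disjoint_left.mpr fun g hga hgb => hab ?_
                simp only [fib, Finset.mem_filter] at hga hgb
                omega
              rw [← Finset.sum_biUnion hdis]
              calc ∑ g ∈ (Finset.range (m+1)).biUnion
                      (fun δ : ℕ => fib (m := m) ((j:ℤ)+1-i+(δ:ℤ))),
                    ‖(star (wrd u v g)) ξ‖^2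
                  ≤ ∑ g : Fin m → Bool, ‖(star (wrd u v g)) ξ‖^2 :=
                    Finset.sum_le_sum_of_subset_of_nonneg (Finset.subset_univ _)
                      (fun g _ _ => sq_nonneg _)
                _ = ‖ξ‖^2 := hq ξ
      calc ∑ f : Fin m → Bool, ‖BB u v m ((j:ℤ)+1-i+(dcf f:ℤ)) ξ‖^2
          ≤ KK * ∑ δ ∈ Finset.image (dcf (m := m)) univ, ‖BB u v m ((j:ℤ)+1-i+(δ:ℤ)) ξ‖^2 := hstep1
        _ ≤ KK * ∑ δ ∈ Finset.range (m+1), ‖BB u v m ((j:ℤ)+1-i+(δ:ℤ)) ξ‖^2 :=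
            mul_le_mul_of_nonneg_left hstep2 hK0
        _ ≤ KK * (KK * ‖ξ‖^2) := mul_le_mul_of_nonneg_left hstep3 hK0
    have hsq : ‖((Pm u v)^[m] (aseq n c) i) ξ‖^2 ≤ (((n:ℝ) * KK * M) * ‖ξ‖)^2 := by
      rw [hB]
      calc ∑ f : Fin m → Bool, ‖(zz u v n c m i f) ξ‖^2
          ≤ ∑ f : Fin m → Bool,
              (n:ℝ) * M^2 * ∑ j : Fin n, ‖BB u v m ((j:ℤ)+1-i+(dcf f:ℤ)) ξ‖^2 :=
            Finset.sum_le_sum fun f _ => hCf f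
        _ = (n:ℝ) * M^2 * ∑ f : Fin m → Bool,
              ∑ j : Fin n, ‖BB u v m ((j:ℤ)+1-i+(dcf f:ℤ)) ξ‖^2 := (Finset.mul_sum _ _ _).symm
        _ = (n:ℝ) * M^2 * ∑ j : Fin n,
              ∑ f : Fin m → Bool, ‖BB u v m ((j:ℤ)+1-i+(dcf f:ℤ)) ξ‖^2 := by
            rw [Finset.sum_comm]
        _ ≤ (n:ℝ) * M^2 * ∑ j : Fin n, KK * (KK * ‖ξ‖^2) := by
            refine mul_le_mul_of_nonneg_left (Finset.sum_le_sum fun j _ => hDj j) ?_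
            positivity
        _ = (((n:ℝ) * KK * M) * ‖ξ‖)^2 := by
            rw [Finset.sum_const, Finset.card_univ, Fintype.card_fin, nsmul_eq_mul]
            ring
    exact le_of_sq_le_sq' (by positivity) hsq (norm_nonneg _)
  exact opNorm_le_bound _ (by positivity) hmain


lemma central_binom_le (t : ℕ) : ((2*t).choose t : ℝ) * Real.sqrt (t+1) ≤ 4^t := by
  induction t with
  | zero => simp
  | succ t ih =>
    have hnat : (2*(t+1)).choose (t+1) * (t+1) = 2 * (2*t+1) * ((2*t).choose t) := by
      have h1 : (2*t+1) * ((2*t).choose t) = (2*t+1).choose (t+1) * (t+1) := by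
        exact_mod_cast Nat.add_one_mul_choose_eq (2*t) t
      have h2 : (2*(t+1)).choose (t+1) = (2*t+1).choose t + (2*t+1).choose (t+1) := by
        rw [show 2*(t+1) = (2*t+1)+1 by ring]
        exact Nat.choose_succ_succ (2*t+1) t
      have h3 : (2*t+1).choose t = (2*t+1).choose (t+1) := by
        rw [← Nat.choose_symm (by omega : t+1 ≤ 2*t+1), show 2*t+1-(t+1) = t by omega]
      calc (2*(t+1)).choose (t+1) * (t+1)
          = ((2*t+1).choose t + (2*t+1).choose (t+1)) * (t+1) := by rw [h2]
        _ = 2 * ((2*t+1).choose (t+1) * (t+1)) := by rw [h3]; ring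
        _ = 2 * ((2*t+1) * ((2*t).choose t)) := by rw [← h1]
        _ = 2 * (2*t+1) * ((2*t).choose t) := by ring
    have hC0 : (0:ℝ) ≤ ((2*t).choose t : ℝ) := Nat.cast_nonneg _
    have hnatR : ((2*(t+1)).choose (t+1) : ℝ) * ((t:ℝ)+1)
        = 2*(2*(t:ℝ)+1)*((2*t).choose t : ℝ) := by exact_mod_cast hnat
    have hs1sq : Real.sqrt ((t:ℝ)+1)^2 = (t:ℝ)+1 := Real.sq_sqrt (by positivity)
    have hs2sq : Real.sqrt ((t:ℝ)+2)^2 = (t:ℝ)+2 := Real.sq_sqrt (by positivity)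
    have hkey : (2*(t:ℝ)+1) * Real.sqrt ((t:ℝ)+2) ≤ 2*((t:ℝ)+1) * Real.sqrt ((t:ℝ)+1) := by
      refine le_of_sq_le_sq' (by positivity) ?_ (by positivity)
      rw [mul_pow, mul_pow, hs1sq, hs2sq]
      nlinarith [Nat.cast_nonneg (α := ℝ) t]
    have hpos : (0:ℝ) < (t:ℝ)+1 := by positivity
    have hfinal : ((2*(t+1)).choose (t+1) : ℝ) * Real.sqrt ((t:ℝ)+2) * ((t:ℝ)+1)
        ≤ 4^(t+1) * ((t:ℝ)+1) := by
      calc ((2*(t+1)).choose (t+1) : ℝ) * Real.sqrt ((t:ℝ)+2) * ((t:ℝ)+1)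
          = (((2*(t+1)).choose (t+1) : ℝ) * ((t:ℝ)+1)) * Real.sqrt ((t:ℝ)+2) := by ring
        _ = (2*(2*(t:ℝ)+1)*((2*t).choose t : ℝ)) * Real.sqrt ((t:ℝ)+2) := by rw [hnatR]
        _ = (2*((2*t).choose t : ℝ)) * ((2*(t:ℝ)+1) * Real.sqrt ((t:ℝ)+2)) := by ring
        _ ≤ (2*((2*t).choose t : ℝ)) * (2*((t:ℝ)+1) * Real.sqrt ((t:ℝ)+1)) :=
            mul_le_mul_of_nonneg_left hkey (by positivity)
        _ = 4*((t:ℝ)+1) * (((2*t).choose t : ℝ) * Real.sqrt ((t:ℝ)+1)) := by ring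
        _ ≤ 4*((t:ℝ)+1) * 4^t := mul_le_mul_of_nonneg_left ih (by positivity)
        _ = 4^(t+1) * ((t:ℝ)+1) := by ring
    have hgoalcast : ((t+1 : ℕ) : ℝ) + 1 = (t:ℝ) + 2 := by push_cast; ring
    rw [hgoalcast]
    exact le_of_mul_le_mul_right hfinal hpos

lemma norm_half_pow (k : ℕ) : ‖((2:ℂ)⁻¹) ^ k‖ = (2⁻¹:ℝ) ^ k := by
  rw [norm_pow, norm_inv]
  norm_num

/-- the approximate solution operator -/
def SolFun (n mm : ℕ) (c : Fin n → H →L[ℂ] H) : Fin (n+1) → H →L[ℂ] H :=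
  fun j => bsq u v mm (aseq n c) ((j : ℕ) : ℤ)

/-- the error operator -/
def ErrFun (n mm : ℕ) (c : Fin n → H →L[ℂ] H) : Fin n → H →L[ℂ] H :=
  fun i => ((2:ℂ)⁻¹) ^ mm • (Pm u v)^[mm] (aseq n c) ((i : ℤ) + 1)

lemma TSol (hu : star u * u = 1) (hv : star v * v = 1)
    (huv : star u * v = 0) (hvu : star v * u = 0)
    (n mm : ℕ) (c : Fin n → H →L[ℂ] H) (i : Fin n) :
    (v * SolFun u v n mm c i.succ - SolFun u v n mm c i.succ * v)
      + (u * SolFun u v n mm c i.castSucc - SolFun u v n mm c i.castSucc * u)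
    = c i - ErrFun u v n mm c i := by
  have h := tele u v hu hv huv hvu (aseq n c) mm ((i:ℤ)+1)
  have e3 : (i:ℤ)+1-1 = (i:ℤ) := by ring
  rw [e3, aseq_eq n c i] at h
  have e1 : ((i.succ : ℕ) : ℤ) = (i : ℤ) + 1 := by
    rw [Fin.val_succ]; push_cast; ring
  have e2 : ((i.castSucc : ℕ) : ℤ) = (i : ℤ) := by
    rw [Fin.coe_castSucc]
  simp only [SolFun, ErrFun, e1, e2]
  exact h

section Linearity

variable (n mm : ℕ) (c c' : Fin n → H →L[ℂ] H) (z : ℂ)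

lemma aseq_add : aseq n (c + c') = aseq n c + aseq n c' := by
  funext i
  simp only [aseq, Pi.add_apply, ← Finset.sum_add_distrib]
  exact Finset.sum_congr rfl fun j _ => by split <;> simp

lemma aseq_smul : aseq n (z • c) = z • aseq n c := by
  funext i
  simp only [aseq, Pi.smul_apply, Finset.smul_sum]
  exact Finset.sum_congr rfl fun j _ => by split <;> simp

lemma sg_add (x y : ℤ → H →L[ℂ] H) : sg u v (x + y) = sg u v x + sg u v y := by
  funext j
  simp only [sg, Pi.add_apply, add_mul]
  abel

lemma sg_smul (x : ℤ → H →L[ℂ] H) : sg u v (z • x) = z • sg u v x := by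
  funext j
  simp only [sg, Pi.smul_apply, smul_mul_assoc, smul_add]

lemma Pm_add (x y : ℤ → H →L[ℂ] H) : Pm u v (x + y) = Pm u v x + Pm u v y := by
  funext i
  simp only [Pm, sg_add, Pi.add_apply, mul_add]
  abel

lemma Pm_smul (x : ℤ → H →L[ℂ] H) : Pm u v (z • x) = z • Pm u v x := by
  funext i
  simp only [Pm, sg_smul, Pi.smul_apply, mul_smul_comm, smul_add]

lemma Pm_iter_add (x y : ℤ → H →L[ℂ] H) :
    ∀ k, (Pm u v)^[k] (x + y) = (Pm u v)^[k] x + (Pm u v)^[k] y := by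
  intro k
  induction k with
  | zero => rfl
  | succ k ih =>
    rw [Function.iterate_succ_apply', ih, Pm_add,
      Function.iterate_succ_apply' (Pm u v) k x, Function.iterate_succ_apply' (Pm u v) k y]

lemma Pm_iter_smul (x : ℤ → H →L[ℂ] H) :
    ∀ k, (Pm u v)^[k] (z • x) = z • (Pm u v)^[k] x := by
  intro k
  induction k with
  | zero => rfl
  | succ k ih =>
    rw [Function.iterate_succ_apply', ih, Pm_smul, Function.iterate_succ_apply' (Pm u v) k x]

lemma SolFun_add : SolFun u v n mm (c + c') = SolFun u v n mm c + SolFun u v n mm c' := by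
  funext j
  simp only [SolFun, bsq, aseq_add, Pm_iter_add, Pi.add_apply, sg_add, smul_add,
    Finset.sum_add_distrib, neg_add]

lemma SolFun_smul : SolFun u v n mm (z • c) = z • SolFun u v n mm c := by
  funext j
  simp only [SolFun, bsq, aseq_smul, Pm_iter_smul, Pi.smul_apply, sg_smul, Finset.smul_sum,
    smul_neg, smul_comm z]

lemma ErrFun_add : ErrFun u v n mm (c + c') = ErrFun u v n mm c + ErrFun u v n mm c' := by
  funext i
  simp only [ErrFun, aseq_add, Pm_iter_add, Pi.add_apply, smul_add]

lemma ErrFun_smul : ErrFun u v n mm (z • c) = z • ErrFun u v n mm c := by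
  funext i
  simp only [ErrFun, aseq_smul, Pm_iter_smul, Pi.smul_apply, smul_comm z]

end Linearity

lemma SolFun_norm_le (hu : star u * u = 1) (hv : star v * v = 1) (hvu : star v * u = 0)
    (n mm : ℕ) (c : Fin n → H →L[ℂ] H) {M : ℝ} (hM : 0 ≤ M) (hc : ∀ j, ‖c j‖ ≤ M)
    (j : Fin (n+1)) :
    ‖SolFun u v n mm c j‖ ≤ (mm : ℝ) * (Real.sqrt 2 / 2 * M) := by
  simp only [SolFun, bsq]
  rw [norm_neg]
  refine (norm_sum_le _ _).trans ?_
  have hterm : ∀ k ∈ range mm,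
      ‖((2:ℂ)⁻¹)^(k+1) • sg u v ((Pm u v)^[k] (aseq n c)) ((j : ℕ) : ℤ)‖
        ≤ Real.sqrt 2 / 2 * M := by
    intro k _
    rw [norm_smul, norm_half_pow]
    have hx : ∀ i : ℤ, ‖(Pm u v)^[k] (aseq n c) i‖ ≤ 2^k * M :=
      norm_Pm_iter_le u v hu hv hvu _ (aseq_norm_le n c hM hc) k
    have hsg : ‖sg u v ((Pm u v)^[k] (aseq n c)) ((j : ℕ) : ℤ)‖ ≤ Real.sqrt 2 * (2^k * M) :=
      norm_sg_le u v hu hv hvu _ hx _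
    calc (2⁻¹:ℝ)^(k+1) * ‖sg u v ((Pm u v)^[k] (aseq n c)) ((j : ℕ) : ℤ)‖
        ≤ (2⁻¹:ℝ)^(k+1) * (Real.sqrt 2 * (2^k * M)) :=
          mul_le_mul_of_nonneg_left hsg (by positivity)
      _ = Real.sqrt 2 / 2 * M * ((2⁻¹:ℝ)^k * 2^k) := by
          rw [pow_succ]
          ring
      _ = Real.sqrt 2 / 2 * M := by
          rw [← mul_pow]
          norm_num
  refine (Finset.sum_le_sum hterm).trans ?_
  rw [Finset.sum_const, Finset.card_range, nsmul_eq_mul]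

lemma err_num (n : ℕ) (hn : 1 ≤ n) :
    (n:ℝ) * ((2*(4*n^2)).choose (4*n^2) : ℝ) * (2⁻¹:ℝ)^(2*(4*n^2)) ≤ 2⁻¹ := by
  set T := 4*n^2 with hT
  have hcb := central_binom_le T
  have hC0 : (0:ℝ) ≤ ((2*T).choose T : ℝ) := Nat.cast_nonneg _
  have h2n : (2*(n:ℝ)) ≤ Real.sqrt ((T:ℝ)+1) := by
    rw [show (2*(n:ℝ)) = Real.sqrt ((2*(n:ℝ))^2) from (Real.sqrt_sq (by positivity)).symm]
    apply Real.sqrt_le_sqrt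
    rw [hT]
    push_cast
    nlinarith [Nat.cast_nonneg (α := ℝ) n]
  have hC2n : ((2*T).choose T : ℝ) * (2*(n:ℝ)) ≤ 4^T :=
    (mul_le_mul_of_nonneg_left h2n hC0).trans hcb
  have h4 : ((2:ℝ)⁻¹)^(2*T) = ((4:ℝ)^T)⁻¹ := by
    rw [pow_mul, ← inv_pow]
    norm_num
  rw [h4]
  have h4pos : (0:ℝ) < 4^T := by positivity
  rw [mul_inv_le_iff₀ h4pos]
  nlinarith [hC2n]

lemma ErrFun_norm_le (hu : star u * u = 1) (hv : star v * v = 1)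
    (huv : star u * v = 0) (hvu : star v * u = 0) (hsum : u * star u + v * star v = 1)
    (n : ℕ) (hn : 1 ≤ n) (c : Fin n → H →L[ℂ] H) {M : ℝ} (hM : 0 ≤ M)
    (hc : ∀ j, ‖c j‖ ≤ M) (i : Fin n) :
    ‖ErrFun u v n (2*(4*n^2)) c i‖ ≤ 2⁻¹ * M := by
  simp only [ErrFun]
  rw [norm_smul, norm_half_pow]
  have hest := main_est u v hu hv huv hvu hsum (4*n^2) n c hM hc ((i:ℤ)+1)
  calc (2⁻¹:ℝ)^(2*(4*n^2)) * ‖(Pm u v)^[2*(4*n^2)] (aseq n c) ((i:ℤ)+1)‖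
      ≤ (2⁻¹:ℝ)^(2*(4*n^2)) * ((n:ℝ) * ((2*(4*n^2)).choose (4*n^2) : ℝ) * M) :=
        mul_le_mul_of_nonneg_left hest (by positivity)
    _ = ((n:ℝ) * ((2*(4*n^2)).choose (4*n^2) : ℝ) * (2⁻¹:ℝ)^(2*(4*n^2))) * M := by ring
    _ ≤ 2⁻¹ * M := mul_le_mul_of_nonneg_right (err_num n hn) hM

end RightInvAux

end AuxRightInv

open RightInvAux in
open ContinuousLinearMap in
/-- The operator `T(b₁,…,b_{n+1}) = ([v,b_i] + [u,b_{i-1}])_{i=2}^{n+1}` on `B(H)^{n+1}` has a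
linear right inverse `R` with `sup_i ‖(Rb)_i‖ ≤ 8√2 (n+1)² sup_i ‖b_i‖`. -/
theorem right_inverse_exists {H : Type*} [NormedAddCommGroup H] [InnerProductSpace ℂ H]
    [CompleteSpace H] (u v : H →L[ℂ] H)
    (h1 : adjoint u * u = 1) (h2 : adjoint v * v = 1)
    (h3 : u * adjoint u + v * adjoint v = 1)
    (h4 : adjoint u * v = 0) (h5 : adjoint v * u = 0)
    (n : ℕ) (hn : 1 ≤ n) :
    ∃ R : (Fin n → H →L[ℂ] H) →ₗ[ℂ] (Fin (n + 1) → H →L[ℂ] H),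
      (∀ c : Fin n → H →L[ℂ] H, ∀ i : Fin n,
        (v * R c i.succ - R c i.succ * v) +
          (u * R c i.castSucc - R c i.castSucc * u) = c i) ∧
      ∀ c : Fin n → H →L[ℂ] H, ∀ i : Fin (n + 1),
        ‖R c i‖ ≤ 8 * Real.sqrt 2 * ((n : ℝ) + 1) ^ 2 * ⨆ j : Fin n, ‖c j‖ := by
  classical
  have hu : star u * u = 1 := by rw [star_eq_adjoint]; exact h1
  have hv : star v * v = 1 := by rw [star_eq_adjoint]; exact h2
  have huv : star u * v = 0 := by rw [star_eq_adjoint]; exact h4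
  have hvu : star v * u = 0 := by rw [star_eq_adjoint]; exact h5
  have hsum : u * star u + v * star v = 1 := by
    rw [star_eq_adjoint, star_eq_adjoint]; exact h3
  have hcs_nonneg : ∀ c : Fin n → H →L[ℂ] H, 0 ≤ ⨆ j : Fin n, ‖c j‖ := fun c =>
    Real.iSup_nonneg fun j => norm_nonneg _
  have hcs_le : ∀ (c : Fin n → H →L[ℂ] H) (j : Fin n), ‖c j‖ ≤ ⨆ j : Fin n, ‖c j‖ := fun c j =>
    le_ciSup (f := fun j : Fin n => ‖c j‖) (Set.finite_range _).bddAbove j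
  have hErrIter : ∀ (c : Fin n → H →L[ℂ] H) (s : ℕ) (i : Fin n),
      ‖(ErrFun u v n (2*(4*n^2)))^[s] c i‖ ≤ (2⁻¹:ℝ)^s * ⨆ j : Fin n, ‖c j‖ := by
    intro c s
    induction s with
    | zero => intro i; simpa using hcs_le c i
    | succ s ih =>
      intro i
      rw [Function.iterate_succ_apply']
      have h := ErrFun_norm_le u v hu hv huv hvu hsum n hn
        ((ErrFun u v n (2*(4*n^2)))^[s] c)
        (M := (2⁻¹:ℝ)^s * ⨆ j : Fin n, ‖c j‖)
        (mul_nonneg (by positivity) (hcs_nonneg c)) ih i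
      calc ‖ErrFun u v n (2*(4*n^2)) ((ErrFun u v n (2*(4*n^2)))^[s] c) i‖
          ≤ 2⁻¹ * ((2⁻¹:ℝ)^s * ⨆ j : Fin n, ‖c j‖) := h
        _ = (2⁻¹:ℝ)^(s+1) * ⨆ j : Fin n, ‖c j‖ := by ring
  have hSolIter : ∀ (c : Fin n → H →L[ℂ] H) (s : ℕ) (j : Fin (n+1)),
      ‖SolFun u v n (2*(4*n^2)) ((ErrFun u v n (2*(4*n^2)))^[s] c) j‖
        ≤ (((2*(4*n^2) : ℕ):ℝ) * (Real.sqrt 2 / 2 * ⨆ j : Fin n, ‖c j‖)) * (2⁻¹:ℝ)^s := by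
    intro c s j
    have h := SolFun_norm_le u v hu hv hvu n (2*(4*n^2)) ((ErrFun u v n (2*(4*n^2)))^[s] c)
      (M := (2⁻¹:ℝ)^s * ⨆ j : Fin n, ‖c j‖)
      (mul_nonneg (by positivity) (hcs_nonneg c)) (hErrIter c s) j
    calc ‖SolFun u v n (2*(4*n^2)) ((ErrFun u v n (2*(4*n^2)))^[s] c) j‖
        ≤ ((2*(4*n^2) : ℕ):ℝ) * (Real.sqrt 2 / 2 * ((2⁻¹:ℝ)^s * ⨆ j : Fin n, ‖c j‖)) := h
      _ = (((2*(4*n^2) : ℕ):ℝ) * (Real.sqrt 2 / 2 * ⨆ j : Fin n, ‖c j‖)) * (2⁻¹:ℝ)^s := by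
          ring
  have hgeo : Summable (fun s : ℕ => ((2:ℝ)⁻¹)^s) := by
    simpa [one_div] using summable_geometric_two
  have hgeosum : ∑' s : ℕ, ((2:ℝ)⁻¹)^s = 2 := by
    simpa [one_div] using tsum_geometric_two
  have hsummable : ∀ c : Fin n → H →L[ℂ] H,
      Summable (fun s : ℕ => SolFun u v n (2*(4*n^2)) ((ErrFun u v n (2*(4*n^2)))^[s] c)) := by
    intro c
    refine Summable.of_norm_bounded
      (g := fun s => (((2*(4*n^2) : ℕ):ℝ) * (Real.sqrt 2 / 2 * ⨆ j : Fin n, ‖c j‖)) * (2⁻¹:ℝ)^s)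
      (hgeo.mul_left _) ?_
    intro s
    refine (pi_norm_le_iff_of_nonneg ?_).mpr fun j => hSolIter c s j
    have := hcs_nonneg c
    positivity
  have hErrIterAdd : ∀ (c c' : Fin n → H →L[ℂ] H) (s : ℕ),
      (ErrFun u v n (2*(4*n^2)))^[s] (c + c')
        = (ErrFun u v n (2*(4*n^2)))^[s] c + (ErrFun u v n (2*(4*n^2)))^[s] c' := by
    intro c c' s
    induction s with
    | zero => rfl
    | succ s ih =>
      rw [Function.iterate_succ_apply', Function.iterate_succ_apply',
        Function.iterate_succ_apply', ih, ErrFun_add]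
  have hErrIterSmul : ∀ (z : ℂ) (c : Fin n → H →L[ℂ] H) (s : ℕ),
      (ErrFun u v n (2*(4*n^2)))^[s] (z • c) = z • (ErrFun u v n (2*(4*n^2)))^[s] c := by
    intro z c s
    induction s with
    | zero => rfl
    | succ s ih =>
      rw [Function.iterate_succ_apply', Function.iterate_succ_apply', ih, ErrFun_smul]
  refine ⟨{ toFun := fun c => ∑' s : ℕ, SolFun u v n (2*(4*n^2)) ((ErrFun u v n (2*(4*n^2)))^[s] c)
            map_add' := ?_
            map_smul' := ?_ }, ?_, ?_⟩
  · intro c c'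
    have hfun : (fun s : ℕ => SolFun u v n (2*(4*n^2)) ((ErrFun u v n (2*(4*n^2)))^[s] (c + c')))
        = fun s => SolFun u v n (2*(4*n^2)) ((ErrFun u v n (2*(4*n^2)))^[s] c)
            + SolFun u v n (2*(4*n^2)) ((ErrFun u v n (2*(4*n^2)))^[s] c') := by
      funext s
      rw [hErrIterAdd c c' s, SolFun_add]
    rw [hfun]
    exact Summable.tsum_add (hsummable c) (hsummable c')
  · intro z c
    have hfun : (fun s : ℕ => SolFun u v n (2*(4*n^2)) ((ErrFun u v n (2*(4*n^2)))^[s] (z • c)))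
        = fun s => z • SolFun u v n (2*(4*n^2)) ((ErrFun u v n (2*(4*n^2)))^[s] c) := by
      funext s
      rw [hErrIterSmul z c s, SolFun_smul]
    simp only [RingHom.id_apply]
    rw [hfun]
    exact ((hsummable c).hasSum.const_smul z).tsum_eq
  · -- the right-inverse identity
    intro c i
    simp only [LinearMap.coe_mk, AddHom.coe_mk]
    set y : ℕ → (H →L[ℂ] H) := fun s => (ErrFun u v n (2*(4*n^2)))^[s] c i with hy
    have hasum := (hsummable c).hasSum
    have hA := (Pi.hasSum.mp hasum) i.succ
    have hB := (Pi.hasSum.mp hasum) i.castSucc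
    have hFA := ((hA.mul_left v).sub (hA.mul_right v)).add
      ((hB.mul_left u).sub (hB.mul_right u))
    have hfun : (fun s : ℕ =>
        (v * SolFun u v n (2*(4*n^2)) ((ErrFun u v n (2*(4*n^2)))^[s] c) i.succ
          - SolFun u v n (2*(4*n^2)) ((ErrFun u v n (2*(4*n^2)))^[s] c) i.succ * v)
        + (u * SolFun u v n (2*(4*n^2)) ((ErrFun u v n (2*(4*n^2)))^[s] c) i.castSucc
          - SolFun u v n (2*(4*n^2)) ((ErrFun u v n (2*(4*n^2)))^[s] c) i.castSucc * u))
        = fun s => y s - y (s+1) := by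
      funext s
      rw [TSol u v hu hv huv hvu n (2*(4*n^2)) ((ErrFun u v n (2*(4*n^2)))^[s] c) i]
      simp only [hy]
      rw [Function.iterate_succ_apply']
    rw [hfun] at hFA
    have hps : ∀ N, ∑ s ∈ Finset.range N, (y s - y (s+1)) = y 0 - y N := fun N =>
      Finset.sum_range_sub' y N
    have hlim1 := hFA.tendsto_sum_nat
    simp only [hps] at hlim1
    have hy0 : Filter.Tendsto (fun N => y 0 - y N) Filter.atTop (nhds (y 0 - 0)) := by
      refine Filter.Tendsto.const_sub _ ?_
      refine squeeze_zero_norm (fun N => hErrIter c N i) ?_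
      have h := (tendsto_pow_atTop_nhds_zero_of_lt_one
        (by norm_num : (0:ℝ) ≤ 2⁻¹) (by norm_num : (2⁻¹:ℝ) < 1)).mul_const
        (⨆ j : Fin n, ‖c j‖)
      simpa using h
    have huniq := tendsto_nhds_unique hlim1 hy0
    rw [huniq]
    simp [hy]
  · -- the norm bound
    intro c j
    simp only [LinearMap.coe_mk, AddHom.coe_mk]
    have hnormsumm : Summable (fun s : ℕ =>
        ‖SolFun u v n (2*(4*n^2)) ((ErrFun u v n (2*(4*n^2)))^[s] c) j‖) :=
      Summable.of_nonneg_of_le (fun _ => norm_nonneg _) (fun s => hSolIter c s j)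
        (hgeo.mul_left _)
    calc ‖(∑' s : ℕ, SolFun u v n (2*(4*n^2)) ((ErrFun u v n (2*(4*n^2)))^[s] c)) j‖
        = ‖∑' s : ℕ, SolFun u v n (2*(4*n^2)) ((ErrFun u v n (2*(4*n^2)))^[s] c) j‖ := by
          rw [tsum_apply (hsummable c)]
      _ ≤ ∑' s : ℕ, ‖SolFun u v n (2*(4*n^2)) ((ErrFun u v n (2*(4*n^2)))^[s] c) j‖ :=
          norm_tsum_le_tsum_norm hnormsumm
      _ ≤ ∑' s : ℕ, (((2*(4*n^2) : ℕ):ℝ) * (Real.sqrt 2 / 2 * ⨆ j : Fin n, ‖c j‖)) * (2⁻¹:ℝ)^s :=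
          Summable.tsum_le_tsum (fun s => hSolIter c s j) hnormsumm (hgeo.mul_left _)
      _ = (((2*(4*n^2) : ℕ):ℝ) * (Real.sqrt 2 / 2 * ⨆ j : Fin n, ‖c j‖)) * 2 := by
          rw [tsum_mul_left, hgeosum]
      _ = 8 * Real.sqrt 2 * (n:ℝ)^2 * ⨆ j : Fin n, ‖c j‖ := by
          push_cast
          ring
      _ ≤ 8 * Real.sqrt 2 * ((n : ℝ) + 1) ^ 2 * ⨆ j : Fin n, ‖c j‖ := by
          have hA : (0:ℝ) ≤ 8 * Real.sqrt 2 * ⨆ j : Fin n, ‖c j‖ := by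
            have := hcs_nonneg c
            positivity
          nlinarith [Nat.cast_nonneg (α := ℝ) n, hA]
end

section
/- Let A be a complex unital Banach algebra and D, X ∈ A with ‖D‖ ≤ 1/2. Writing E := [D,X] - 1 with ‖E‖ ≤ ε < 1, one has the inequality 1 ≤ ε·exp(‖X‖). -/
/-!
Write `E = [D, X] - 1`. By the Leibniz rule `[D, Xⁿ⁺¹] = (n + 1) Xⁿ + ∑ₖ Xᵏ E Xⁿ⁻ᵏ`, and since
`‖[D, Y]‖ ≤ 2 ‖D‖ ‖Y‖ ≤ ‖Y‖` this gives `(n + 1) ‖Xⁿ‖ ≤ ‖Xⁿ⁺¹‖ + (n + 1) ε ‖X‖ⁿ`. Dividing by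
`(n + 1)!`, the sequence `‖Xⁿ‖ / n!` decreases from `1` by at most `ε ‖X‖ⁿ / n!` per step and
tends to `0`, so summing the steps gives `1 ≤ ε ∑ ‖X‖ⁿ / n! = ε exp ‖X‖`.
-/

open Finset Filter Topology

section Commutator

variable {R : Type*}

theorem mul_pow_sub_pow_mul_sub_nsmul_succ [Ring R] (D X : R) (n : ℕ) :
    D * X ^ (n + 2) - X ^ (n + 2) * D - (n + 2) • X ^ (n + 1) =
      (D * X ^ (n + 1) - X ^ (n + 1) * D - (n + 1) • X ^ n) * X +
        X ^ (n + 1) * (D * X - X * D - 1) := by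
  have h : (n + 1) • X ^ n * X = (n + 1) • X ^ (n + 1) := by rw [smul_mul_assoc, ← pow_succ]
  rw [sub_mul, sub_mul, h, show (n + 2) • X ^ (n + 1) = (n + 1) • X ^ (n + 1) + X ^ (n + 1) from
    succ_nsmul _ _, pow_succ, pow_succ]
  noncomm_ring

theorem norm_mul_pow_sub_pow_mul_sub_nsmul_le [NormedRing R] (D X : R) (n : ℕ) :
    ‖D * X ^ (n + 1) - X ^ (n + 1) * D - (n + 1) • X ^ n‖ ≤
      (n + 1) * ‖D * X - X * D - 1‖ * ‖X‖ ^ n := by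
  induction n with
  | zero => simp
  | succ n ih =>
    rw [mul_pow_sub_pow_mul_sub_nsmul_succ]
    calc _ ≤ ‖D * X ^ (n + 1) - X ^ (n + 1) * D - (n + 1) • X ^ n‖ * ‖X‖ +
          ‖X ^ (n + 1)‖ * ‖D * X - X * D - 1‖ :=
          (norm_add_le _ _).trans (add_le_add (norm_mul_le _ _) (norm_mul_le _ _))
      _ ≤ (n + 1) * ‖D * X - X * D - 1‖ * ‖X‖ ^ n * ‖X‖ +
          ‖X‖ ^ (n + 1) * ‖D * X - X * D - 1‖ := by
          gcongr
          exact norm_pow_le' X n.succ_pos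
      _ = _ := by push_cast; ring

theorem norm_mul_sub_mul_le [NormedRing R] (D Y : R) : ‖D * Y - Y * D‖ ≤ 2 * ‖D‖ * ‖Y‖ :=
  calc ‖D * Y - Y * D‖ ≤ ‖D‖ * ‖Y‖ + ‖Y‖ * ‖D‖ :=
        (norm_sub_le _ _).trans (add_le_add (norm_mul_le _ _) (norm_mul_le _ _))
    _ = 2 * ‖D‖ * ‖Y‖ := by ring

theorem succ_mul_norm_pow_le [NormedRing R] [NormedSpace ℝ R] (D X : R) (n : ℕ) :
    (n + 1) * ‖X ^ n‖ ≤
      2 * ‖D‖ * ‖X ^ (n + 1)‖ + (n + 1) * ‖D * X - X * D - 1‖ * ‖X‖ ^ n := by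
  have h := norm_sub_le (D * X ^ (n + 1) - X ^ (n + 1) * D)
    (D * X ^ (n + 1) - X ^ (n + 1) * D - (n + 1) • X ^ n)
  rw [sub_sub_cancel, RCLike.norm_nsmul ℝ, nsmul_eq_mul] at h
  push_cast at h
  linarith [norm_mul_sub_mul_le D (X ^ (n + 1)), norm_mul_pow_sub_pow_mul_sub_nsmul_le D X n]

end Commutator

theorem le_mul_exp_of_succ_mul_le {b : ℕ → ℝ} {r c : ℝ} (hr : 0 ≤ r) (hc : 0 ≤ c)
    (hb_nonneg : ∀ n, 0 ≤ b n) (hb_le : ∀ n, b n ≤ r ^ n)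
    (hstep : ∀ n : ℕ, (n + 1) * b n ≤ b (n + 1) + (n + 1) * c * r ^ n) :
    b 0 ≤ c * Real.exp r := by
  set a : ℕ → ℝ := fun n => b n / n.factorial
  have ha_step (n : ℕ) : a n - a (n + 1) ≤ c * (r ^ n / n.factorial) := by
    have hfac : ((n + 1).factorial : ℝ) = (n + 1) * n.factorial := by
      push_cast [Nat.factorial_succ]; ring
    calc a n - a (n + 1) = ((n + 1) * b n - b (n + 1)) / (n + 1).factorial := by
          simp only [a, hfac]; field_simp
      _ ≤ (n + 1) * c * r ^ n / (n + 1).factorial := by gcongr; linarith [hstep n]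
      _ = c * (r ^ n / n.factorial) := by rw [hfac]; field_simp
  have ha_partial (N : ℕ) : a 0 - a N ≤ c * Real.exp r :=
    calc a 0 - a N = ∑ i ∈ range N, (a i - a (i + 1)) := (sum_range_sub' a N).symm
      _ ≤ c * ∑ i ∈ range N, r ^ i / i.factorial := by
          rw [mul_sum]; exact sum_le_sum fun i _ => ha_step i
      _ ≤ c * Real.exp r := by gcongr; exact Real.sum_le_exp_of_nonneg hr N
  have ha_lim : Tendsto a atTop (𝓝 0) :=
    tendsto_of_tendsto_of_tendsto_of_le_of_le tendsto_const_nhds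
      (FloorSemiring.tendsto_pow_div_factorial_atTop r)
      (fun n => by have := hb_nonneg n; positivity)
      (fun n => div_le_div_of_nonneg_right (hb_le n) (Nat.cast_nonneg _))
  have h := le_of_tendsto' (ha_lim.const_sub (a 0)) ha_partial
  simpa [a] using h

theorem popa_key_inequality_general {A : Type*} [NormedRing A] [NormedAlgebra ℂ A]
    [NormOneClass A] (D X : A) (hD : ‖D‖ ≤ 1 / 2) (ε : ℝ)
    (hE : ‖D * X - X * D - 1‖ ≤ ε) :
    1 ≤ ε * Real.exp ‖X‖ := by
  have hstep (n : ℕ) : (n + 1) * ‖X ^ n‖ ≤ ‖X ^ (n + 1)‖ + (n + 1) * ε * ‖X‖ ^ n := by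
    refine (succ_mul_norm_pow_le D X n).trans (add_le_add ?_ (by gcongr))
    nlinarith [norm_nonneg (X ^ (n + 1))]
  simpa using le_mul_exp_of_succ_mul_le (norm_nonneg X) ((norm_nonneg _).trans hE)
    (fun n => norm_nonneg (X ^ n)) (norm_pow_le X) hstep

/-- The key inequality in Popa's argument: if `‖D‖ ≤ 1/2` and `‖[D,X] - 1‖ ≤ ε < 1` then
`1 ≤ ε exp ‖X‖`. -/
theorem popa_key_inequality {A : Type*} [NormedRing A] [NormedAlgebra ℂ A] [CompleteSpace A]
    [NormOneClass A] (D X : A) (hD : ‖D‖ ≤ 1 / 2) (ε : ℝ) (hε : ε < 1)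
    (hE : ‖D * X - X * D - 1‖ ≤ ε) :
    1 ≤ ε * Real.exp ‖X‖ :=
  popa_key_inequality_general D X hD ε hE
end
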